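/- arXiv:math/0508096 — 5 statements merged into one kernel-verified Lean document; each statement's English description precedes it below -/
import Mathlib

section
/- Let F be an N×N complex matrix whose j-th column is the vector f_j in ℂ^N, and let |f_j| denote the Euclidean norm of f_j. Then |perm(F)| ≤ (N!/N^{N/2}) ∏_{j=1}^N |f_j|, where perm denotes the permanent. -/
open scoped BigOperators

/-- The permanent of an `N × N` complex matrix: `∑_{σ ∈ S_N} ∏_j F_{σ(j), j}`. -/
noncomputable def perm {N : ℕ} (F : Matrix (Fin N) (Fin N) ℂ) : ℂ :=
  ∑ σ : Equiv.Perm (Fin N), ∏ j, F (σ j) j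

/-- Euclidean norm of a vector in `ℂ^N`. -/
noncomputable def enorm {N : ℕ} (f : Fin N → ℂ) : ℝ :=
  Real.sqrt (∑ i, ‖f i‖ ^ 2)

/-!
The argument of Carlen, Lieb and Loss. Replacing the entries by their absolute values reduces the
bound to nonnegative real matrices, and homogeneity in each column reduces it further to the
maximum `M` of the permanent over nonnegative matrices with unit columns, a compact set. The
permanent is linear in each column, with coefficient vector the permanents of the minors, so at a
maximiser `A` the equality case of Cauchy–Schwarz gives `perm (minor i j) = M * A i j`. With
`C N = N! / N ^ (N / 2)` and `b j = A i j ^ 2`, the bound in dimension `n` for the minors gives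
`(M / C n) ^ 2 * b j ≤ ∏_{k ≠ j} (1 - b k)` for every row `i`. Some row has `∑ b ≥ 1`, hence an
entry `b j ≥ 1 / (n + 1)`, and then AM–GM and a binomial estimate bound the product by
`(n + 1) * (n / (n + 1)) ^ n * b j = (C (n + 1) / C n) ^ 2 * b j`.
-/

open Finset Matrix
open scoped Nat

namespace Equiv.Perm

variable {n : ℕ}

def extendSuccAbove (j i : Fin (n + 1)) (τ : Perm (Fin n)) : Perm (Fin (n + 1)) :=
  (finSuccEquiv' j).trans ((Equiv.optionCongr τ).trans (finSuccEquiv' i).symm)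

@[simp]
lemma extendSuccAbove_apply_self (j i : Fin (n + 1)) (τ : Perm (Fin n)) :
    extendSuccAbove j i τ j = i := by
  simp [extendSuccAbove, finSuccEquiv'_at]

@[simp]
lemma extendSuccAbove_apply_succAbove (j i : Fin (n + 1)) (τ : Perm (Fin n)) (k : Fin n) :
    extendSuccAbove j i τ (j.succAbove k) = i.succAbove (τ k) := by
  simp [extendSuccAbove, finSuccEquiv'_succAbove]

lemma bijective_extendSuccAbove (j : Fin (n + 1)) :
    Function.Bijective fun p : Fin (n + 1) × Perm (Fin n) => extendSuccAbove j p.1 p.2 := by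
  refine (Fintype.bijective_iff_injective_and_card _).2 ⟨fun ⟨i, τ⟩ ⟨i', τ'⟩ h => ?_, ?_⟩
  · obtain rfl : i = i' := by simpa using congr($h j)
    refine Prod.ext rfl (Equiv.ext fun k => Fin.succAbove_right_injective (p := i) ?_)
    simpa using congr($h (j.succAbove k))
  · simp [Fintype.card_perm, Nat.factorial_succ]

end Equiv.Perm

namespace Matrix

variable {R : Type*} [CommSemiring R] {n : ℕ}

theorem permanent_succ_column (A : Matrix (Fin (n + 1)) (Fin (n + 1)) R) (j : Fin (n + 1)) :
    A.permanent = ∑ i, A i j * (A.submatrix i.succAbove j.succAbove).permanent := by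
  simp only [permanent]
  rw [← (Equiv.Perm.bijective_extendSuccAbove j).sum_comp, Fintype.sum_prod_type]
  refine sum_congr rfl fun i _ => ?_
  rw [mul_sum]
  refine sum_congr rfl fun τ _ => ?_
  simp [Fin.prod_univ_succAbove _ j]

theorem permanent_updateCol_eq_sum (A : Matrix (Fin (n + 1)) (Fin (n + 1)) R) (j : Fin (n + 1))
    (v : Fin (n + 1) → R) :
    (A.updateCol j v).permanent = ∑ i, v i * (A.submatrix i.succAbove j.succAbove).permanent := by
  simp [permanent_succ_column _ j]

theorem norm_permanent_le {𝕜 : Type*} [NormedCommRing 𝕜] [NormOneClass 𝕜] {ι : Type*}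
    [Fintype ι] [DecidableEq ι] (A : Matrix ι ι 𝕜) :
    ‖A.permanent‖ ≤ (A.map (‖·‖)).permanent :=
  (norm_sum_le _ _).trans <| sum_le_sum fun _ _ => Finset.norm_prod_le _ _

theorem permanent_nonneg {ι R : Type*} [Fintype ι] [DecidableEq ι] [CommSemiring R]
    [PartialOrder R] [IsOrderedRing R] {A : Matrix ι ι R} (hA : ∀ i j, 0 ≤ A i j) :
    0 ≤ A.permanent :=
  sum_nonneg fun _ _ => prod_nonneg fun _ _ => hA _ _

end Matrix

theorem Real.prod_le_sum_div_card_pow {ι : Type*} (s : Finset ι) (f : ι → ℝ)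
    (hf : ∀ i ∈ s, 0 ≤ f i) : ∏ i ∈ s, f i ≤ ((∑ i ∈ s, f i) / #s) ^ #s := by
  rcases s.eq_empty_or_nonempty with rfl | hs
  · simp
  have hcard : (#s : ℝ) ≠ 0 := by positivity
  have amgm := Real.geom_mean_le_arith_mean_weighted s (fun _ => (#s : ℝ)⁻¹) f
    (fun _ _ => by positivity) (by simp [hcard]) hf
  rw [Real.finsetProd_rpow s f hf, ← mul_sum, inv_mul_eq_div] at amgm
  calc ∏ i ∈ s, f i = ((∏ i ∈ s, f i) ^ (#s : ℝ)⁻¹) ^ #s :=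
        (Real.rpow_inv_natCast_pow (prod_nonneg hf) hs.card_pos.ne').symm
    _ ≤ ((∑ i ∈ s, f i) / #s) ^ #s := by gcongr; exact Real.rpow_nonneg (prod_nonneg hf) _

theorem one_add_div_sq_pow_le (n : ℕ) {u : ℝ} (hu₁ : 1 ≤ u) (hu₂ : u ≤ n + 1) :
    (1 + (u - 1) / (n : ℝ) ^ 2) ^ n ≤ u := by
  rcases n.eq_zero_or_pos with rfl | hn
  · simpa using hu₁
  have hn' : (0 : ℝ) < n := by exact_mod_cast hn
  set a : ℝ := (u - 1) / (n : ℝ) ^ 2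
  have hna : n * a = (u - 1) / n := by simp only [a]; field_simp
  have hna₁ : n * a ≤ 1 := by rw [hna, div_le_one hn']; linarith
  -- each binomial term `C(n, k+1) a^(k+1)` is at most `(n a)^(k+1) ≤ n a`
  have hterm : ∀ k ∈ range n, a ^ (k + 1) * (n.choose (k + 1) : ℝ) ≤ n * a := fun k _ =>
    calc a ^ (k + 1) * (n.choose (k + 1) : ℝ) ≤ a ^ (k + 1) * (n : ℝ) ^ (k + 1) := by
          gcongr; exact_mod_cast n.choose_le_pow (k + 1)
      _ = (n * a) ^ (k + 1) := by rw [mul_pow, mul_comm]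
      _ ≤ n * a := pow_le_of_le_one (by positivity) hna₁ (by omega)
  calc (1 + a) ^ n = ∑ k ∈ range n, a ^ (k + 1) * (n.choose (k + 1) : ℝ) + 1 := by
        rw [add_comm, add_pow, sum_range_succ']; simp
    _ ≤ ∑ _k ∈ range n, n * a + 1 := add_le_add_left (sum_le_sum hterm) 1
    _ = u := by rw [sum_const, card_range, nsmul_eq_mul, hna]; field_simp; ring

theorem pow_sub_one_add_div_le (n : ℕ) {β : ℝ} (hβ₀ : 1 / (n + 1) ≤ β) (hβ₁ : β ≤ 1) :
    ((n - 1 + β) / n) ^ n ≤ (n + 1) * ((n : ℝ) / (n + 1)) ^ n * β := by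
  rcases n.eq_zero_or_pos with rfl | hn
  · simpa using hβ₀
  have hn' : (0 : ℝ) < n := by exact_mod_cast hn
  -- with `u = (n+1) β`, the base factors as `(1 + (u-1)/n²) * (n/(n+1))`
  have hbase : (n - 1 + β) / n = (1 + ((n + 1) * β - 1) / (n : ℝ) ^ 2) * (n / (n + 1)) := by
    field_simp; ring
  rw [hbase, mul_pow, mul_right_comm]
  gcongr
  apply one_add_div_sq_pow_le
  · rwa [div_le_iff₀' (by positivity)] at hβ₀
  · nlinarith

theorem le_of_forall_mul_le_prod_one_sub (n : ℕ) {b : Fin (n + 1) → ℝ} {t : ℝ}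
    (hb₁ : ∀ j, b j ≤ 1) (hsum : 1 ≤ ∑ j, b j)
    (h : ∀ j, t * b j ≤ ∏ k, (1 - b (j.succAbove k))) :
    t ≤ (n + 1) * ((n : ℝ) / (n + 1)) ^ n := by
  obtain ⟨j, -, hj⟩ : ∃ j ∈ univ, 1 / ((n : ℝ) + 1) ≤ b j :=
    exists_le_of_sum_le univ_nonempty <| by
      rw [sum_const, card_univ, Fintype.card_fin, nsmul_eq_mul]
      push_cast
      rwa [mul_one_div_cancel (by positivity)]
  have hrest : ∑ k, (1 - b (j.succAbove k)) ≤ n - 1 + b j := by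
    have := Fin.sum_univ_succAbove b j
    simp only [sum_sub_distrib, sum_const, card_univ, Fintype.card_fin, nsmul_one]
    linarith
  refine le_of_mul_le_mul_right ?_ (lt_of_lt_of_le (by positivity) hj)
  calc t * b j ≤ ∏ k, (1 - b (j.succAbove k)) := h j
    _ ≤ ((∑ k, (1 - b (j.succAbove k))) / n) ^ n :=
        (Real.prod_le_sum_div_card_pow univ _ fun k _ => sub_nonneg.2 (hb₁ _)).trans_eq
          (by simp)
    _ ≤ ((n - 1 + b j) / n) ^ n := by
        gcongr
        exact div_nonneg (sum_nonneg fun k _ => sub_nonneg.2 (hb₁ _)) n.cast_nonneg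
    _ ≤ (n + 1) * ((n : ℝ) / (n + 1)) ^ n * b j := pow_sub_one_add_div_le n hj (hb₁ j)

noncomputable def hadamardConst (N : ℕ) : ℝ := (N ! : ℝ) / (N : ℝ) ^ ((N : ℝ) / 2)

lemma hadamardConst_pos (N : ℕ) : 0 < hadamardConst N := by
  rcases N with _ | N
  · simp [hadamardConst]
  · exact div_pos (by positivity) (Real.rpow_pos_of_pos (by positivity) _)

lemma hadamardConst_sq (N : ℕ) : hadamardConst N ^ 2 = (N ! : ℝ) ^ 2 / (N : ℝ) ^ N := by
  rw [hadamardConst, div_pow, ← Real.rpow_mul_natCast N.cast_nonneg]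
  norm_num

lemma hadamardConst_succ_sq (n : ℕ) :
    hadamardConst (n + 1) ^ 2 = hadamardConst n ^ 2 * ((n + 1) * ((n : ℝ) / (n + 1)) ^ n) := by
  rw [hadamardConst_sq, hadamardConst_sq, Nat.factorial_succ]
  rcases n.eq_zero_or_pos with rfl | hn
  · norm_num
  have : (n : ℝ) ≠ 0 := by positivity
  push_cast
  rw [div_pow]
  field_simp
  ring

theorem eq_smul_of_sum_sq_le_sq {ι : Type*} [Fintype ι] {x g : ι → ℝ} {M : ℝ}
    (hx : ∑ i, x i ^ 2 = 1) (hxg : ∑ i, x i * g i = M) (hg : ∑ i, g i ^ 2 ≤ M ^ 2) :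
    g = M • x := by
  have hdist : ∑ i, (g i - M * x i) ^ 2 = ∑ i, g i ^ 2 - M ^ 2 := by
    have : ∑ i, (g i - M * x i) ^ 2
        = ∑ i, g i ^ 2 - 2 * M * ∑ i, x i * g i + M ^ 2 * ∑ i, x i ^ 2 := by
      simp only [mul_sum, ← sum_sub_distrib, ← sum_add_distrib]
      exact sum_congr rfl fun i _ => by ring
    rw [this, hx, hxg]; ring
  have hzero := (sum_eq_zero_iff_of_nonneg fun i _ => sq_nonneg (g i - M * x i)).1
    (le_antisymm (by linarith) (sum_nonneg fun i _ => sq_nonneg _))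
  funext i
  simpa [sub_eq_zero] using hzero i (mem_univ i)

theorem sum_sq_le_sq_of_forall_sum_mul_le {ι : Type*} [Fintype ι] {g : ι → ℝ} {M : ℝ}
    (hg : ∀ i, 0 ≤ g i)
    (h : ∀ v : ι → ℝ, (∀ i, 0 ≤ v i) → ∑ i, v i ^ 2 = 1 → ∑ i, v i * g i ≤ M) :
    ∑ i, g i ^ 2 ≤ M ^ 2 := by
  obtain ⟨s, hs₀, hs⟩ : ∃ s : ℝ, 0 ≤ s ∧ s ^ 2 = ∑ i, g i ^ 2 :=
    ⟨_, Real.sqrt_nonneg _, Real.sq_sqrt (sum_nonneg fun i _ => sq_nonneg _)⟩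
  rw [← hs]
  rcases hs₀.eq_or_lt with rfl | hpos
  · simpa using sq_nonneg M
  have hv : ∑ i, (g i / s) ^ 2 = 1 := by
    simp only [div_pow, ← sum_div, ← hs]; exact div_self (by positivity)
  have hvg : ∑ i, g i / s * g i = s := by
    simp only [div_mul_eq_mul_div, ← sq, ← sum_div, ← hs]; field_simp
  exact pow_le_pow_left₀ hpos.le (hvg.ge.trans (h _ (fun i => div_nonneg (hg i) hpos.le) hv)) 2

def nonnegUnitColumns (m n : Type*) [Fintype m] : Set (Matrix m n ℝ) :=
  {A | (∀ i j, 0 ≤ A i j) ∧ ∀ j, ∑ i, A i j ^ 2 = 1}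

section nonnegUnitColumns

variable {m n : Type*} [Fintype m]

lemma sq_le_one_of_mem_nonnegUnitColumns {A : Matrix m n ℝ} (hA : A ∈ nonnegUnitColumns m n)
    (i : m) (j : n) : A i j ^ 2 ≤ 1 :=
  hA.2 j ▸ single_le_sum (f := fun i => A i j ^ 2) (fun _ _ => sq_nonneg _) (mem_univ i)

lemma updateCol_mem_nonnegUnitColumns [DecidableEq n] {A : Matrix m n ℝ}
    (hA : A ∈ nonnegUnitColumns m n) (j : n) {v : m → ℝ} (hv₀ : ∀ i, 0 ≤ v i)
    (hv₁ : ∑ i, v i ^ 2 = 1) : A.updateCol j v ∈ nonnegUnitColumns m n := by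
  refine ⟨fun i k => ?_, fun k => ?_⟩ <;> rcases eq_or_ne k j with rfl | hk
  · simpa using hv₀ i
  · simpa [hk] using hA.1 i k
  · simpa using hv₁
  · simpa [hk] using hA.2 k

lemma isCompact_nonnegUnitColumns : IsCompact (nonnegUnitColumns m n) := by
  have hclosed : IsClosed (nonnegUnitColumns m n) := by
    have h₀ : IsClosed {A : Matrix m n ℝ | ∀ i j, 0 ≤ A i j} := by
      simp only [Set.ofPred_forall]
      exact isClosed_iInter fun i => isClosed_iInter fun j => isClosed_le continuous_const
        ((continuous_apply j).comp (continuous_apply i))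
    have h₁ : IsClosed {A : Matrix m n ℝ | ∀ j, ∑ i, A i j ^ 2 = 1} := by
      simp only [Set.ofPred_forall]
      exact isClosed_iInter fun j => isClosed_eq (by fun_prop) continuous_const
    exact h₀.inter h₁
  refine (isCompact_univ_pi fun _ => isCompact_univ_pi fun _ => isCompact_Icc).of_isClosed_subset
    hclosed fun A hA => Set.mem_univ_pi.2 fun i => Set.mem_univ_pi.2 fun j =>
      ⟨hA.1 i j, (sq_le_one_iff₀ (hA.1 i j)).1 (sq_le_one_of_mem_nonnegUnitColumns hA i j)⟩

lemma one_mem_nonnegUnitColumns [DecidableEq m] : (1 : Matrix m m ℝ) ∈ nonnegUnitColumns m m :=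
  ⟨fun i j => by by_cases h : i = j <;> simp [one_apply, h],
    fun j => by simp [one_apply, ite_pow]⟩

lemma exists_isMaxOn_permanent [DecidableEq m] :
    ∃ A ∈ nonnegUnitColumns m m, IsMaxOn permanent (nonnegUnitColumns m m) A :=
  isCompact_nonnegUnitColumns.exists_isMaxOn ⟨1, one_mem_nonnegUnitColumns⟩
    (continuous_finsetSum _ fun _ _ => continuous_finsetProd _ fun _ _ => by fun_prop).continuousOn

end nonnegUnitColumns

theorem permanent_submatrix_succAbove_eq_of_isMaxOn {n : ℕ}
    {A : Matrix (Fin (n + 1)) (Fin (n + 1)) ℝ} (hA : A ∈ nonnegUnitColumns _ _)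
    (hmax : IsMaxOn permanent (nonnegUnitColumns _ _) A) (i j : Fin (n + 1)) :
    (A.submatrix i.succAbove j.succAbove).permanent = A.permanent * A i j := by
  -- replacing column `j` by any admissible `v` cannot increase the permanent
  have hlin : ∀ v : Fin (n + 1) → ℝ, (∀ i, 0 ≤ v i) → ∑ i, v i ^ 2 = 1 →
      ∑ i, v i * (A.submatrix i.succAbove j.succAbove).permanent ≤ A.permanent :=
    fun v hv₀ hv₁ => permanent_updateCol_eq_sum A j v ▸
      hmax (updateCol_mem_nonnegUnitColumns hA j hv₀ hv₁)
  have hminor : ∀ i : Fin (n + 1), 0 ≤ (A.submatrix i.succAbove j.succAbove).permanent :=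
    fun i => permanent_nonneg fun _ _ => hA.1 _ _
  -- equality case of Cauchy–Schwarz
  exact congr_fun (eq_smul_of_sum_sq_le_sq (x := fun i => A i j) (hA.2 j)
    (permanent_succ_column A j).symm (sum_sq_le_sq_of_forall_sum_mul_le hminor hlin)) i

theorem sq_mul_le_prod_one_sub_of_isMaxOn {n : ℕ} {C : ℝ}
    (ih : ∀ B : Matrix (Fin n) (Fin n) ℝ, (∀ i j, 0 ≤ B i j) →
      B.permanent ≤ C * ∏ j, √(∑ i, B i j ^ 2))
    {A : Matrix (Fin (n + 1)) (Fin (n + 1)) ℝ} (hA : A ∈ nonnegUnitColumns _ _)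
    (hmax : IsMaxOn permanent (nonnegUnitColumns _ _) A) (i j : Fin (n + 1)) :
    (A.permanent * A i j) ^ 2 ≤ C ^ 2 * ∏ k, (1 - A i (j.succAbove k) ^ 2) := by
  have hcol : ∀ k,
      ∑ i', A (i.succAbove i') (j.succAbove k) ^ 2 = 1 - A i (j.succAbove k) ^ 2 := by
    intro k
    have := Fin.sum_univ_succAbove (fun i' => A i' (j.succAbove k) ^ 2) i
    rw [hA.2] at this
    linarith
  have hbound := ih (A.submatrix i.succAbove j.succAbove) fun _ _ => hA.1 _ _
  rw [permanent_submatrix_succAbove_eq_of_isMaxOn hA hmax] at hbound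
  calc (A.permanent * A i j) ^ 2
        ≤ (C * ∏ k, √(∑ i', A (i.succAbove i') (j.succAbove k) ^ 2)) ^ 2 :=
        pow_le_pow_left₀ (mul_nonneg (permanent_nonneg hA.1) (hA.1 i j)) hbound 2
    _ = C ^ 2 * ∏ k, (1 - A i (j.succAbove k) ^ 2) := by
        rw [mul_pow, ← prod_pow]
        simp only [hcol]
        exact congrArg _ (prod_congr rfl fun k _ => Real.sq_sqrt
          (sub_nonneg.2 (sq_le_one_of_mem_nonnegUnitColumns hA _ _)))

theorem permanent_le_hadamardConst_of_isMaxOn {n : ℕ}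
    (ih : ∀ B : Matrix (Fin n) (Fin n) ℝ, (∀ i j, 0 ≤ B i j) →
      B.permanent ≤ hadamardConst n * ∏ j, √(∑ i, B i j ^ 2))
    {A : Matrix (Fin (n + 1)) (Fin (n + 1)) ℝ} (hA : A ∈ nonnegUnitColumns _ _)
    (hmax : IsMaxOn permanent (nonnegUnitColumns _ _) A) :
    A.permanent ≤ hadamardConst (n + 1) := by
  have hC := hadamardConst_pos n
  -- the squares of all entries sum to `n + 1`
  obtain ⟨i, -, hi⟩ : ∃ i ∈ univ, 1 ≤ ∑ j, A i j ^ 2 :=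
    exists_le_of_sum_le univ_nonempty (by rw [sum_comm]; simp [hA.2])
  have hrow := le_of_forall_mul_le_prod_one_sub n (t := (A.permanent / hadamardConst n) ^ 2)
    (sq_le_one_of_mem_nonnegUnitColumns hA i) hi fun j => by
      rw [div_pow, div_mul_eq_mul_div, div_le_iff₀' (by positivity), ← mul_pow]
      exact sq_mul_le_prod_one_sub_of_isMaxOn ih hA hmax i j
  have hsq : A.permanent ^ 2 ≤ hadamardConst (n + 1) ^ 2 := by
    rwa [hadamardConst_succ_sq, ← div_le_iff₀' (by positivity), ← div_pow]
  exact (pow_le_pow_iff_left₀ (permanent_nonneg hA.1) (hadamardConst_pos _).le two_ne_zero).1 hsq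

theorem permanent_le_mul_prod_of_forall_mem_nonnegUnitColumns {ι : Type*} [Fintype ι]
    [DecidableEq ι] {B : ℝ}
    (h : ∀ A ∈ nonnegUnitColumns ι ι, permanent A ≤ B) {A : Matrix ι ι ℝ}
    (hA : ∀ i j, 0 ≤ A i j) :
    A.permanent ≤ B * ∏ j, √(∑ i, A i j ^ 2) := by
  set c : ι → ℝ := fun j => √(∑ i, A i j ^ 2)
  by_cases hc : ∃ j, c j = 0
  · obtain ⟨j, hj⟩ := hc
    have hcol : ∀ i, A i j = 0 := fun i => by
      simpa using (sum_eq_zero_iff_of_nonneg fun i _ => sq_nonneg (A i j)).1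
        ((Real.sqrt_eq_zero (sum_nonneg fun _ _ => sq_nonneg _)).1 hj) i (mem_univ i)
    have h0 : A.permanent = 0 := by
      have : A = A.updateCol j ((0 : ℝ) • 0) := by
        ext i k; by_cases hk : k = j <;> simp [hk, hcol]
      rw [this, permanent_updateCol_smul, zero_mul]
    rw [h0, prod_eq_zero (mem_univ j) hj, mul_zero]
  push Not at hc
  have hcpos : ∀ j, 0 < c j := fun j => (Real.sqrt_nonneg _).lt_of_ne' (hc j)
  set Y : Matrix ι ι ℝ := of fun i j => A i j / c j
  have hY : Y ∈ nonnegUnitColumns ι ι := by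
    refine ⟨fun i j => div_nonneg (hA i j) (hcpos j).le, fun j => ?_⟩
    have hcj : c j ^ 2 = ∑ i, A i j ^ 2 := Real.sq_sqrt (sum_nonneg fun _ _ => sq_nonneg _)
    simp only [Y, of_apply, div_pow, ← sum_div, ← hcj]
    exact div_self (pow_ne_zero 2 (hcpos j).ne')
  have hAY : A.permanent = (∏ j, c j) * Y.permanent := by
    simp only [permanent, mul_sum, ← prod_mul_distrib, Y, of_apply]
    exact sum_congr rfl fun σ _ => prod_congr rfl fun j _ => by field_simp [(hcpos j).ne']
  rw [hAY, mul_comm]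
  exact mul_le_mul_of_nonneg_right (h Y hY) (prod_nonneg fun j _ => (hcpos j).le)

theorem permanent_le_hadamardConst_mul_prod {N : ℕ} (A : Matrix (Fin N) (Fin N) ℝ)
    (hA : ∀ i j, 0 ≤ A i j) : A.permanent ≤ hadamardConst N * ∏ j, √(∑ i, A i j ^ 2) := by
  induction N with
  | zero => simp [hadamardConst, permanent_isEmpty]
  | succ n ih =>
    obtain ⟨A₀, hA₀, hmax⟩ := exists_isMaxOn_permanent (m := Fin (n + 1))
    exact permanent_le_mul_prod_of_forall_mem_nonnegUnitColumns
      (fun B hB => (hmax hB).trans (permanent_le_hadamardConst_of_isMaxOn ih hA₀ hmax)) hA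

theorem perm_eq_permanent {N : ℕ} (F : Matrix (Fin N) (Fin N) ℂ) : perm F = F.permanent := rfl

theorem permanent_hadamard {N : ℕ} (F : Matrix (Fin N) (Fin N) ℂ) :
    ‖perm F‖ ≤
      (N.factorial : ℝ) / (N : ℝ) ^ ((N : ℝ) / 2) *
        ∏ j, _root_.enorm (fun i => F i j) := by
  rw [perm_eq_permanent]
  exact (norm_permanent_le F).trans
    (permanent_le_hadamardConst_mul_prod (F.map (‖·‖)) fun i j => norm_nonneg (F i j))
end

section
/- Let Z be an N×N complex matrix all of whose entries lie on the unit circle. The product ∏_{j=1}^N Z_{j,σ(j)} is independent of the permutation σ ∈ S_N if and only if there exist ξ, ζ ∈ ℂ^N with all entries on the unit circle such that Z_{j,k} = ξ_j ζ_k for all j, k. -/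
open scoped BigOperators

/-!
If all permutation products agree, comparing a permutation `σ` with `σ * swap i j` and cancelling
the (nonzero) common factor shows that `Z i (σ j) * Z j (σ i) = Z i (σ i) * Z j (σ j)`. Taking `σ` a transposition fixing `0` gives
`Z j k * Z 0 0 = Z j 0 * Z 0 k`, so `Z j k = (Z j 0 / Z 0 0) * Z 0 k` is a product of unimodular
factors. Conversely, for `Z j k = ξ j * ζ k` every permutation product equals `∏ ξ * ∏ ζ`.
-/

namespace Matrix

variable {n M : Type*} [Fintype n] [DecidableEq n]

theorem prod_perm_mul_swap [CommMonoid M] (Z : Matrix n n M) (σ : Equiv.Perm n) {i j : n}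
    (hij : i ≠ j) :
    (∏ x, Z x (σ x)) * (Z i (σ j) * Z j (σ i)) =
      (∏ x, Z x ((σ * Equiv.swap i j) x)) * (Z i (σ i) * Z j (σ j)) := by
  have hsplit : ∀ τ : Equiv.Perm n, ∏ x, Z x (τ x) =
      (Z i (τ i) * Z j (τ j)) * ∏ x ∈ ({i, j} : Finset n)ᶜ, Z x (τ x) := fun τ => by
    rw [← Finset.prod_pair hij (f := fun x => Z x (τ x)), Finset.prod_mul_prod_compl]
  have hrest : ∏ x ∈ ({i, j} : Finset n)ᶜ, Z x ((σ * Equiv.swap i j) x) =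
      ∏ x ∈ ({i, j} : Finset n)ᶜ, Z x (σ x) := by
    refine Finset.prod_congr rfl fun x hx => ?_
    simp only [Finset.mem_compl, Finset.mem_insert, Finset.mem_singleton, not_or] at hx
    rw [Equiv.Perm.mul_apply, Equiv.swap_apply_of_ne_of_ne hx.1 hx.2]
  rw [hsplit σ, hsplit (σ * Equiv.swap i j), hrest]
  simp only [Equiv.Perm.mul_apply, Equiv.swap_apply_left, Equiv.swap_apply_right]
  ac_rfl

variable [CommMonoidWithZero M] [Nontrivial M] [IsLeftCancelMulZero M] {Z : Matrix n n M}

theorem mul_swap_eq_of_prod_perm_eq (hZ : ∀ j k, Z j k ≠ 0)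
    (h : ∀ σ τ : Equiv.Perm n, ∏ x, Z x (σ x) = ∏ x, Z x (τ x)) (σ : Equiv.Perm n) (i j : n) :
    Z i (σ j) * Z j (σ i) = Z i (σ i) * Z j (σ j) := by
  rcases eq_or_ne i j with rfl | hij
  · rfl
  have hprod : ∏ x, Z x (σ x) ≠ 0 := Finset.prod_ne_zero_iff.mpr fun x _ => hZ x (σ x)
  have := prod_perm_mul_swap Z σ hij
  rw [← h σ (σ * Equiv.swap i j)] at this
  exact mul_left_cancel₀ hprod this

theorem mul_eq_mul_of_prod_perm_eq (hZ : ∀ j k, Z j k ≠ 0)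
    (h : ∀ σ τ : Equiv.Perm n, ∏ x, Z x (σ x) = ∏ x, Z x (τ x)) (a j k : n) :
    Z j k * Z a a = Z j a * Z a k := by
  rcases eq_or_ne j a with rfl | hja
  · exact mul_comm _ _
  rcases eq_or_ne k a with rfl | hka
  · rfl
  have := mul_swap_eq_of_prod_perm_eq hZ h (Equiv.swap j k) a j
  rw [Equiv.swap_apply_left, Equiv.swap_apply_of_ne_of_ne hja.symm hka.symm] at this
  rw [mul_comm (Z j k), ← this, mul_comm]

end Matrix

theorem Equiv.Perm.prod_mul_apply {n M : Type*} [Fintype n] [CommMonoid M] (ξ ζ : n → M)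
    (σ : Equiv.Perm n) : ∏ j, ξ j * ζ (σ j) = (∏ j, ξ j) * ∏ k, ζ k := by
  rw [Finset.prod_mul_distrib, Equiv.prod_comp σ ζ]

theorem unimodular_product_independent_iff {N : ℕ}
    (Z : Matrix (Fin N) (Fin N) ℂ)
    (hZ : ∀ j k, ‖Z j k‖ = 1) :
    (∀ σ τ : Equiv.Perm (Fin N), ∏ j, Z j (σ j) = ∏ j, Z j (τ j)) ↔
      ∃ ξ ζ : Fin N → ℂ, (∀ j, ‖ξ j‖ = 1) ∧
        (∀ k, ‖ζ k‖ = 1) ∧ ∀ j k, Z j k = ξ j * ζ k := by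
  have hne : ∀ j k, Z j k ≠ 0 := fun j k => norm_ne_zero_iff.mp (by rw [hZ]; exact one_ne_zero)
  constructor
  · intro h
    cases N with
    | zero => exact ⟨0, 0, fun j => j.elim0, fun k => k.elim0, fun j => j.elim0⟩
    | succ N =>
      refine ⟨fun j => Z j 0 / Z 0 0, fun k => Z 0 k, fun j => ?_, fun k => hZ 0 k, fun j k => ?_⟩
      · rw [norm_div, hZ, hZ, div_one]
      · rw [div_mul_eq_mul_div, eq_div_iff (hne 0 0)]
        exact Matrix.mul_eq_mul_of_prod_perm_eq hne h 0 j k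
  · rintro ⟨ξ, ζ, -, -, hξζ⟩ σ τ
    simp only [hξζ, Equiv.Perm.prod_mul_apply]
end

section
/- Let f_1, …, f_N be nonnegative functions on {1,…,N}, let μ be the uniform probability measure on the symmetric group S_N, and let π_j(σ) = σ(j). Then ∫_{S_N} ∏_{j=1}^N f_j(σ(j)) dμ(σ) ≤ ∏_{j=1}^N ||f_j ∘ π_j||_{L²(S_N,μ)}, where ||g||_{L²} = (∑_{σ} g(σ)²/N!)^{1/2}. -/
/-
By Gibbs' variational principle the inequality is dual to the entropy inequality of
Carlen, Lieb and Loss: for every probability density `F` on `S_N`, with `F_j` the law of `σ j`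
and `D` the relative entropy with respect to the uniform distribution,
`∑ j, D (F_j) ≤ 2 * D F`; one applies it to `F σ ∝ ∏ j, f j (σ j)`.

The entropy inequality is proved by induction on `N`, conditioning on `σ 0 = c`. The chain rule
writes `D F` as `D F_0` plus the average of the conditional entropies. The law of `σ (i + 1)` is
a mixture over `c` of the conditional laws of `τ i`, relabelled injectively into `{k ≠ c}`, and
the log-sum inequality bounds the cost of mixing by
`log (N / (N - 1)) + ∑ k, F_{i+1} k * log (1 - F_0 k)`. Summed over `i` these costs are at most
`D F_0`, an inequality on the simplex that rests on `t log t - (1 - t) log (1 - t)` being convex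
on `[0, 1/2]`, where all coordinates but the largest lie.
-/

open Finset Real

theorem sub_mul_le_mul_log_div_sub_mul_log {a b r : ℝ} (ha : 0 ≤ a) (hb : 0 ≤ b) (hr : 0 < r)
    (hab : a ≠ 0 → b ≠ 0) : a - b * r ≤ a * log (a / b) - a * log r := by
  rcases ha.eq_or_lt with rfl | ha
  · simpa using mul_nonneg hb hr.le
  have hb : 0 < b := hb.lt_of_ne' (hab ha.ne')
  have key := one_sub_inv_le_log_of_pos (div_pos ha (mul_pos hb hr))
  rw [log_div ha.ne' (mul_pos hb hr).ne', log_mul hb.ne' hr.ne', inv_div] at key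
  rw [log_div ha.ne' hb.ne']
  have := mul_le_mul_of_nonneg_left key ha.le
  rw [mul_sub, mul_one, mul_div_cancel₀ _ ha.ne'] at this
  linarith

theorem sum_mul_log_div_sum_le {ι : Type*} (s : Finset ι) {a b : ι → ℝ}
    (ha : ∀ i ∈ s, 0 ≤ a i) (hb : ∀ i ∈ s, 0 ≤ b i) (hab : ∀ i ∈ s, a i ≠ 0 → b i ≠ 0) :
    (∑ i ∈ s, a i) * log ((∑ i ∈ s, a i) / ∑ i ∈ s, b i) ≤ ∑ i ∈ s, a i * log (a i / b i) := by
  rcases (sum_nonneg ha).eq_or_lt with hA | hA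
  · have hzero := (sum_eq_zero_iff_of_nonneg ha).mp hA.symm
    rw [← hA, zero_mul, sum_eq_zero fun i hi ↦ by rw [hzero i hi, zero_mul]]
  obtain ⟨i, hi, hai⟩ := exists_ne_zero_of_sum_ne_zero hA.ne'
  have hB : 0 < ∑ i ∈ s, b i :=
    sum_pos' hb ⟨i, hi, (hb i hi).lt_of_ne' (hab i hi hai)⟩
  have hr : 0 < (∑ i ∈ s, a i) / ∑ i ∈ s, b i := div_pos hA hB
  have key := sum_le_sum fun i hi ↦
    sub_mul_le_mul_log_div_sub_mul_log (ha i hi) (hb i hi) hr (hab i hi)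
  rw [sum_sub_distrib, sum_sub_distrib, ← sum_mul, ← sum_mul, mul_div_cancel₀ _ hB.ne',
    sub_self] at key
  linarith

noncomputable def klUniform {α : Type*} [Fintype α] (q : α → ℝ) : ℝ :=
  ∑ a, q a * log (Fintype.card α * q a)

section klUniform

variable {α : Type*} [Fintype α]

theorem klUniform_eq (q : α → ℝ) :
    klUniform q = ∑ a, q a * log (q a) + (∑ a, q a) * log (Fintype.card α) := by
  rcases isEmpty_or_nonempty α with hα | hα
  · simp [klUniform]
  rw [klUniform, sum_mul, ← sum_add_distrib]
  refine sum_congr rfl fun a _ ↦ ?_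
  rcases eq_or_ne (q a) 0 with h | h
  · simp [h]
  · rw [log_mul (by positivity) h]; ring

theorem sum_mul_log_le_klUniform_add {m g : α → ℝ} (hm : ∀ a, 0 ≤ m a) (hm1 : ∑ a, m a = 1)
    (hg : ∀ a, 0 ≤ g a) (hmg : ∀ a, m a ≠ 0 → g a ≠ 0) :
    ∑ a, m a * log (g a) ≤ klUniform m + log ((∑ a, g a) / Fintype.card α) := by
  obtain ⟨a, -, ha⟩ := exists_ne_zero_of_sum_ne_zero (hm1.trans_ne one_ne_zero)
  have hα : Nonempty α := ⟨a⟩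
  have hG : 0 < ∑ a, g a := sum_pos' (fun a _ ↦ hg a) ⟨a, mem_univ a, (hg a).lt_of_ne' (hmg a ha)⟩
  have key := sum_mul_log_div_sum_le univ (fun a _ ↦ hm a) (fun a _ ↦ hg a)
    (fun a _ ↦ hmg a)
  have hsplit : ∀ a, m a * log (m a / g a) = m a * log (m a) - m a * log (g a) := by
    intro a
    rcases eq_or_ne (m a) 0 with h | h
    · simp [h]
    · rw [log_div h (hmg a h)]; ring
  simp only [hsplit, sum_sub_distrib, hm1, one_div, log_inv, one_mul] at key
  rw [klUniform_eq, hm1, one_mul, log_div hG.ne' (by positivity)]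
  linarith

theorem klUniform_nonneg {q : α → ℝ} (hq : ∀ a, 0 ≤ q a) (hq1 : ∑ a, q a = 1) :
    0 ≤ klUniform q := by
  have hα : Nonempty α := by
    by_contra h
    simp [not_nonempty_iff.mp h] at hq1
  have hcard : (Fintype.card α : ℝ) ≠ 0 := Nat.cast_ne_zero.mpr Fintype.card_ne_zero
  simpa [div_self hcard] using
    sum_mul_log_le_klUniform_add hq hq1 (fun _ ↦ zero_le_one) fun _ _ ↦ one_ne_zero

theorem klUniform_comp_equiv {β : Type*} [Fintype β] (e : β ≃ α) (F : α → ℝ) :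
    klUniform (F ∘ e) = klUniform F := by
  simp only [klUniform, Function.comp_apply, Fintype.card_congr e]
  exact e.sum_comp fun a ↦ F a * log (Fintype.card α * F a)

theorem klUniform_prod {β : Type*} [Fintype β] {F : α × β → ℝ} (hF : ∀ x, 0 ≤ F x) :
    klUniform F = klUniform (fun a ↦ ∑ b, F (a, b)) +
      ∑ a, (∑ b, F (a, b)) * klUniform (fun b ↦ F (a, b) / ∑ b', F (a, b')) := by
  simp only [klUniform, Fintype.card_prod, Fintype.sum_prod_type]
  rw [← sum_add_distrib]
  refine sum_congr rfl fun a _ ↦ ?_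
  set p := ∑ b, F (a, b)
  rcases eq_or_ne p 0 with hp | hp
  · have hzero := (sum_eq_zero_iff_of_nonneg fun b _ ↦ hF (a, b)).mp hp
    simp [hp, hzero]
  rw [mul_sum _ _ p, sum_mul, ← sum_add_distrib]
  refine sum_congr rfl fun b _ ↦ ?_
  rcases eq_or_ne (F (a, b)) 0 with hab | hab
  · simp [hab]
  have : Nonempty α := ⟨a⟩
  have : Nonempty β := ⟨b⟩
  rw [← mul_assoc, mul_div_cancel₀ _ hp, ← mul_add, ← log_mul (by positivity) (by positivity)]
  congr 2
  push_cast
  field_simp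

end klUniform

theorem klUniform_div_sum {Ω : Type*} [Fintype Ω] {w : Ω → ℝ} (hw : 0 < ∑ ω, w ω) :
    klUniform (fun ω ↦ w ω / ∑ ω', w ω') =
      ∑ ω, w ω / (∑ ω', w ω') * log (w ω) - log ((∑ ω, w ω) / Fintype.card Ω) := by
  obtain ⟨ω₀, -, -⟩ := exists_ne_zero_of_sum_ne_zero hw.ne'
  have : Nonempty Ω := ⟨ω₀⟩
  have hsplit : ∀ ω, w ω / (∑ ω', w ω') * log (w ω / ∑ ω', w ω') =
      w ω / (∑ ω', w ω') * log (w ω) - w ω / (∑ ω', w ω') * log (∑ ω', w ω') := fun ω ↦ by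
    rcases eq_or_ne (w ω) 0 with h | h
    · simp [h]
    · rw [log_div h hw.ne']; ring
  rw [klUniform_eq, ← sum_div, div_self hw.ne', one_mul, sum_congr rfl fun ω _ ↦ hsplit ω,
    sum_sub_distrib, ← sum_mul, ← sum_div, div_self hw.ne', one_mul,
    log_div hw.ne' (by positivity)]
  ring

def pushforward {Ω α : Type*} [Fintype Ω] [DecidableEq α] (X : Ω → α) (F : Ω → ℝ) (a : α) :
    ℝ :=
  ∑ ω with X ω = a, F ω

section pushforward

variable {Ω Ω' α β : Type*} [Fintype Ω]

theorem pushforward_nonneg [DecidableEq α] {X : Ω → α} {F : Ω → ℝ} (hF : ∀ ω, 0 ≤ F ω) (a : α) :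
    0 ≤ pushforward X F a :=
  sum_nonneg fun ω _ ↦ hF ω

theorem sum_pushforward [Fintype α] [DecidableEq α] (X : Ω → α) (F : Ω → ℝ) :
    ∑ a, pushforward X F a = ∑ ω, F ω :=
  sum_fiberwise univ X F

theorem sum_pushforward_mul [Fintype α] [DecidableEq α] (X : Ω → α) (F : Ω → ℝ) (L : α → ℝ) :
    ∑ a, pushforward X F a * L a = ∑ ω, F ω * L (X ω) := by
  simp only [pushforward, sum_mul]
  rw [← sum_fiberwise univ X fun ω ↦ F ω * L (X ω)]
  exact sum_congr rfl fun a _ ↦ sum_congr rfl fun ω hω ↦ by rw [(mem_filter.mp hω).2]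

theorem pushforward_const_mul [DecidableEq α] (X : Ω → α) (F : Ω → ℝ) (c : ℝ) (a : α) :
    pushforward X (fun ω ↦ c * F ω) a = c * pushforward X F a :=
  (mul_sum _ _ _).symm

theorem pushforward_comp [Fintype α] [DecidableEq α] [DecidableEq β] (φ : α → β) (X : Ω → α)
    (F : Ω → ℝ) :
    pushforward (φ ∘ X) F = pushforward φ (pushforward X F) := by
  ext b
  calc pushforward (φ ∘ X) F b = ∑ ω, F ω * if φ (X ω) = b then 1 else 0 := by
        simp [pushforward, sum_filter]
    _ = ∑ a, pushforward X F a * if φ a = b then 1 else 0 :=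
        (sum_pushforward_mul X F fun a ↦ if φ a = b then 1 else 0).symm
    _ = pushforward φ (pushforward X F) b := by
        simp only [mul_ite, mul_one, mul_zero, ← sum_filter]; rfl

theorem pushforward_comp_equiv [Fintype Ω'] [DecidableEq α] (e : Ω' ≃ Ω) (X : Ω → α) (F : Ω → ℝ) :
    pushforward (X ∘ e) (F ∘ e) = pushforward X F := by
  ext a
  simp only [pushforward, sum_filter, Function.comp_apply]
  exact e.sum_comp fun ω ↦ if X ω = a then F ω else 0

theorem sum_pushforward_prod [DecidableEq α] {A B : Type*} [Fintype A] [Fintype B] (X : A × B → α)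
    (F : A × B → ℝ) (a : α) :
    ∑ c, pushforward (fun b ↦ X (c, b)) (fun b ↦ F (c, b)) a = pushforward X F a := by
  simp only [pushforward, sum_filter]
  exact (Fintype.sum_prod_type fun x ↦ if X x = a then F x else 0).symm

theorem pushforward_apply_of_injective [Fintype α] [DecidableEq β] {φ : α → β}
    (hφ : φ.Injective) (q : α → ℝ) (a : α) : pushforward φ q (φ a) = q a := by
  rw [pushforward, sum_eq_single_of_mem a (by simp)
    fun b hb hba ↦ (hba (hφ (mem_filter.mp hb).2)).elim]

theorem pushforward_eq_zero_of_notMem_range [Fintype α] [DecidableEq β] {φ : α → β} (q : α → ℝ)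
    {b : β} (hb : b ∉ Set.range φ) : pushforward φ q b = 0 :=
  sum_eq_zero fun a ha ↦ (hb ⟨a, (mem_filter.mp ha).2⟩).elim

theorem sum_pushforward_of_injective [Fintype α] [Fintype β] [DecidableEq β] {φ : α → β}
    (hφ : φ.Injective) (q : α → ℝ) {g : ℝ → ℝ} (hg : g 0 = 0) :
    ∑ b, g (pushforward φ q b) = ∑ a, g (q a) := by
  refine (Fintype.sum_of_injective φ hφ _ _ (fun b hb ↦ ?_) fun a ↦ ?_).symm
  · rw [pushforward_eq_zero_of_notMem_range q hb, hg]
  · rw [pushforward_apply_of_injective hφ]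

theorem sum_const_mul_pushforward_mul_log {α β : Type*} [Fintype α] [Fintype β] [DecidableEq β]
    {φ : α → β} (hφ : φ.Injective) (q : α → ℝ) (r : ℝ) :
    ∑ b, r * pushforward φ q b * log (r * pushforward φ q b / r) =
      r * ∑ a, q a * log (q a) := by
  rcases eq_or_ne r 0 with rfl | hr
  · simp
  simp_rw [mul_div_cancel_left₀ _ hr, mul_assoc, ← mul_sum]
  rw [sum_pushforward_of_injective hφ q (g := fun y ↦ y * log y) (by simp)]

end pushforward

theorem sum_mul_log_prod {Ω ι α : Type*} [Fintype Ω] [Fintype ι] [Fintype α] [DecidableEq α]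
    {F : Ω → ℝ} {X : ι → Ω → α} {f : ι → α → ℝ} (hF : ∀ ω, F ω ≠ 0 → ∀ i, f i (X i ω) ≠ 0) :
    ∑ ω, F ω * log (∏ i, f i (X i ω)) = ∑ i, ∑ a, pushforward (X i) F a * log (f i a) := by
  simp_rw [sum_pushforward_mul]
  rw [sum_comm]
  refine sum_congr rfl fun ω _ ↦ ?_
  rcases eq_or_ne (F ω) 0 with h | h
  · simp [h]
  · rw [log_prod fun i _ ↦ hF ω h i, mul_sum]

theorem sum_mul_log_le_of_diag_eq_zero {α : Type*} [Fintype α] {J : α → α → ℝ} {p m : α → ℝ}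
    (hJ : ∀ c k, 0 ≤ J c k) (hdiag : ∀ k, J k k = 0) (hp : ∀ c, ∑ k, J c k = p c)
    (hm : ∀ k, ∑ c, J c k = m k) (hp1 : ∑ c, p c = 1) :
    ∑ k, m k * log (m k) ≤
      ∑ c, ∑ k, J c k * log (J c k / p c) + ∑ k, m k * log (1 - p k) := by
  classical
  rw [sum_comm, ← sum_add_distrib]
  refine sum_le_sum fun k _ ↦ ?_
  have hJp : ∀ c, J c k ≤ p c := fun c ↦ hp c ▸ single_le_sum (fun k _ ↦ hJ c k) (mem_univ k)
  have hm0 : 0 ≤ m k := hm k ▸ sum_nonneg fun c _ ↦ hJ c k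
  have hm_le : m k ≤ 1 - p k := by
    rw [← hm k, ← sum_erase univ (f := fun c ↦ J c k) (hdiag k), ← hp1,
      ← sum_erase_eq_sub (mem_univ k)]
    exact sum_le_sum fun c _ ↦ hJp c
  -- log-sum inequality over `c ≠ k`, where the `p c` add up to `1 - p k`
  have hlogsum := sum_mul_log_div_sum_le (univ.erase k) (a := fun c ↦ J c k) (b := p)
    (fun c _ ↦ hJ c k) (fun c _ ↦ (hJ c k).trans (hJp c))
    fun c _ h ↦ (((hJ c k).lt_of_ne' h).trans_le (hJp c)).ne'
  rw [sum_erase univ (f := fun c ↦ J c k) (hdiag k), hm, sum_erase_eq_sub (mem_univ k), hp1,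
    sum_erase univ (f := fun c ↦ J c k * log (J c k / p c)) (by simp [hdiag k])] at hlogsum
  have hsplit : m k * log (m k) = m k * log (m k / (1 - p k)) + m k * log (1 - p k) := by
    rcases hm0.eq_or_lt with h | h
    · simp [← h]
    · rw [log_div h.ne' (by linarith)]; ring
  linarith

noncomputable def skewEntropy (t : ℝ) : ℝ := t * log t - (1 - t) * log (1 - t)

theorem continuous_skewEntropy : Continuous skewEntropy :=
  continuous_mul_log.sub (continuous_mul_log.comp (continuous_const.sub continuous_id))

theorem hasDerivAt_skewEntropy {t : ℝ} (h0 : t ≠ 0) (h1 : t ≠ 1) :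
    HasDerivAt skewEntropy (log t + log (1 - t) + 2) t := by
  have h := (hasDerivAt_mul_log h0).sub
    ((hasDerivAt_mul_log (sub_ne_zero.mpr h1.symm)).comp t ((hasDerivAt_id t).const_sub 1))
  exact h.congr_deriv (by ring)

theorem log_add_log_one_sub_le {u v : ℝ} (hu : 0 < u) (huv : u ≤ v) (hv : v < 1)
    (huv1 : u + v ≤ 1) : log u + log (1 - u) ≤ log v + log (1 - v) := by
  rw [← log_mul hu.ne' (by linarith), ← log_mul (by linarith) (by linarith)]
  exact log_le_log (mul_pos hu (by linarith)) (by nlinarith)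

theorem convexOn_skewEntropy : ConvexOn ℝ (Set.Icc 0 (1 / 2)) skewEntropy := by
  have hderiv : ∀ x ∈ interior (Set.Icc (0 : ℝ) (1 / 2)),
      HasDerivAt skewEntropy (log x + log (1 - x) + 2) x := by
    rw [interior_Icc]
    exact fun x hx ↦ hasDerivAt_skewEntropy hx.1.ne' (by linarith [hx.2])
  refine MonotoneOn.convexOn_of_deriv (convex_Icc _ _) continuous_skewEntropy.continuousOn
    (fun x hx ↦ (hderiv x hx).differentiableAt.differentiableWithinAt) ?_
  intro x hx y hy hxy
  rw [(hderiv x hx).deriv, (hderiv y hy).deriv]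
  rw [interior_Icc] at hx hy
  linarith [log_add_log_one_sub_le hx.1 hxy (by linarith [hy.2]) (by linarith [hx.2, hy.2])]

theorem card_mul_skewEntropy_avg_le_sum {ι : Type*} {s : Finset ι} (hs : s.Nonempty) {p : ι → ℝ}
    (hp : ∀ k ∈ s, p k ∈ Set.Icc 0 (1 / 2)) :
    #s * skewEntropy ((∑ k ∈ s, p k) / #s) ≤ ∑ k ∈ s, skewEntropy (p k) := by
  have hcard : (0 : ℝ) < #s := by exact_mod_cast hs.card_pos
  have h := convexOn_skewEntropy.map_sum_le (t := s) (w := fun _ ↦ (#s : ℝ)⁻¹) (p := p)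
    (fun _ _ ↦ by positivity) (by simp [hcard.ne']) hp
  simp only [smul_eq_mul, ← mul_sum] at h
  rw [div_eq_inv_mul]
  calc _ ≤ #s * ((#s : ℝ)⁻¹ * ∑ k ∈ s, skewEntropy (p k)) := by gcongr
    _ = _ := by field_simp

theorem monotoneOn_skewEntropy_add {n : ℕ} (hn : 1 ≤ n) :
    MonotoneOn (fun a ↦ skewEntropy a + n * skewEntropy ((1 - a) / n))
      (Set.Icc (1 / (n + 1)) 1) := by
  have hn0 : (0 : ℝ) < n := by exact_mod_cast hn
  have hn1 : (1 : ℝ) ≤ n := by exact_mod_cast hn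
  refine monotoneOn_of_hasDerivWithinAt_nonneg (f' := fun a ↦
      (log a + log (1 - a) + 2) - (log ((1 - a) / n) + log (1 - (1 - a) / n) + 2))
    (convex_Icc _ _) (continuous_skewEntropy.add (continuous_const.mul
      (continuous_skewEntropy.comp (by fun_prop)))).continuousOn (fun a ha ↦ ?_)
    fun a ha ↦ ?_
  all_goals
    rw [interior_Icc] at ha
    have ha0 : 0 < a := lt_trans (by positivity) ha.1
    have hu0 : 0 < (1 - a) / n := div_pos (by linarith [ha.2]) hn0
    have hua : (1 - a) / n ≤ a := by
      have h1 := ha.1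
      rw [div_lt_iff₀ (by positivity)] at h1
      rw [div_le_iff₀ hn0]
      linarith
    have hu1 : (1 - a) / n + a ≤ 1 := by
      have : (1 - a) / n ≤ 1 - a := div_le_self (by linarith [ha.2]) hn1
      linarith
  · have hu := (hasDerivAt_skewEntropy hu0.ne' (by linarith [ha.2])).comp a
      (((hasDerivAt_id a).const_sub 1).div_const (n : ℝ))
    refine (((hasDerivAt_skewEntropy ha0.ne' ha.2.ne).add (hu.const_mul (n : ℝ))).congr_deriv
      ?_).hasDerivWithinAt
    field_simp
    ring
  · linarith [log_add_log_one_sub_le hu0 hua ha.2 hu1]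

section simplex

variable {α : Type*} [Fintype α]

theorem card_mul_skewEntropy_inv_le_sum (hα : 2 ≤ Fintype.card α) {p : α → ℝ}
    (hp : ∀ k, 0 ≤ p k) (hp1 : ∑ k, p k = 1) :
    Fintype.card α * skewEntropy (1 / Fintype.card α) ≤ ∑ k, skewEntropy (p k) := by
  classical
  obtain ⟨n, hn⟩ : ∃ n, Fintype.card α = n + 1 := ⟨_, (Nat.sub_add_cancel (by omega)).symm⟩
  have hn1 : 1 ≤ n := by omega
  have : Nonempty α := Fintype.card_pos_iff.mp (by omega)
  obtain ⟨k₀, hk₀⟩ := Finite.exists_max p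
  set a := p k₀
  set s := univ.erase k₀
  have hs : #s = n := by rw [card_erase_of_mem (mem_univ _), card_univ, hn, Nat.add_sub_cancel]
  have hs_sum : ∑ k ∈ s, p k = 1 - a := by rw [sum_erase_eq_sub (mem_univ _), hp1]
  have ha1 : a ≤ 1 := hp1 ▸ single_le_sum (fun k _ ↦ hp k) (mem_univ k₀)
  have ha : 1 / (n + 1 : ℝ) ≤ a := by
    have := sum_le_sum fun k (_ : k ∈ univ) ↦ hk₀ k
    rw [hp1, sum_const, card_univ, hn, nsmul_eq_mul] at this
    rw [div_le_iff₀ (by positivity)]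
    push_cast at this
    linarith
  have hrest : n * skewEntropy ((1 - a) / n) ≤ ∑ k ∈ s, skewEntropy (p k) := by
    have hsn : s.Nonempty := card_pos.mp (by omega)
    have := card_mul_skewEntropy_avg_le_sum hsn fun k hk ↦ ⟨hp k, by
      have := single_le_sum (fun k _ ↦ hp k) hk
      linarith [hk₀ k]⟩
    rwa [hs, hs_sum] at this
  have hψ := monotoneOn_skewEntropy_add hn1 ⟨le_rfl, by
    rw [div_le_one (by positivity)]; linarith [(Nat.one_le_cast (α := ℝ)).mpr hn1]⟩ ⟨ha, ha1⟩ ha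
  have hmid : (1 - 1 / (n + 1 : ℝ)) / n = 1 / (n + 1) := by
    field_simp
    ring
  simp only [hmid] at hψ
  rw [← add_sum_erase _ _ (mem_univ k₀), hn]
  push_cast
  linarith

theorem mul_log_add_sum_mul_log_one_sub_le_klUniform {n : ℕ} (hα : Fintype.card α = n + 1)
    {p : α → ℝ} (hp : ∀ k, 0 ≤ p k) (hp1 : ∑ k, p k = 1) :
    n * log ((n + 1) / n) + ∑ k, (1 - p k) * log (1 - p k) ≤ klUniform p := by
  rcases Nat.eq_zero_or_pos n with rfl | hn
  · obtain ⟨x, hx⟩ := Fintype.card_eq_one_iff.mp hα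
    have huniv : (univ : Finset α) = {x} := by ext y; simp [hx y]
    simp only [huniv, sum_singleton] at hp1
    simp [klUniform, huniv, hα, hp1]
  have hsplit : ∀ k, p k * log (Fintype.card α * p k) =
      skewEntropy (p k) + (1 - p k) * log (1 - p k) + p k * log (n + 1) := by
    intro k
    rw [hα, skewEntropy]
    rcases eq_or_ne (p k) 0 with h | h
    · simp [h]
    · push_cast
      rw [log_mul (by positivity) h]
      ring
  have hmin := card_mul_skewEntropy_inv_le_sum (by omega) hp hp1
  have hn0 : (0 : ℝ) < n := by exact_mod_cast hn
  have hvalue : (Fintype.card α : ℝ) * skewEntropy (1 / Fintype.card α) =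
      n * log ((n + 1) / n) - log (n + 1) := by
    rw [hα, skewEntropy]
    push_cast
    rw [show (1 : ℝ) - 1 / (n + 1) = n / (n + 1) by field_simp; ring, one_div, log_inv,
      log_div hn0.ne' (by positivity), log_div (by positivity) hn0.ne']
    field_simp
    ring
  rw [klUniform, sum_congr rfl fun k _ ↦ hsplit k, sum_add_distrib, sum_add_distrib, ← sum_mul,
    hp1]
  linarith

end simplex

open Equiv

theorem card_smul_sum_perm_apply {α M : Type*} [Fintype α] [DecidableEq α] [AddCommMonoid M]
    (g : α → M) (j : α) :
    Fintype.card α • ∑ σ : Perm α, g (σ j) = (Fintype.card α).factorial • ∑ k, g k := by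
  have hindep : ∀ k, ∑ σ : Perm α, g (σ k) = ∑ σ : Perm α, g (σ j) := fun k ↦ by
    rw [← Equiv.sum_comp (Equiv.mulRight (swap j k)) fun σ : Perm α ↦ g (σ j)]
    simp
  calc Fintype.card α • ∑ σ : Perm α, g (σ j)
      = ∑ k, ∑ σ : Perm α, g (σ k) := by simp [hindep]
    _ = ∑ σ : Perm α, ∑ k, g k := by
      rw [sum_comm]
      exact sum_congr rfl fun σ _ ↦ Equiv.sum_comp σ g
    _ = (Fintype.card α).factorial • ∑ k, g k := by simp [Fintype.card_perm]

theorem one_div_factorial_mul_sum_perm_apply {α : Type*} [Fintype α] [DecidableEq α]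
    (g : α → ℝ) (j : α) :
    1 / ((Fintype.card α).factorial : ℝ) * ∑ σ : Perm α, g (σ j) =
      (∑ k, g k) / Fintype.card α := by
  have h := card_smul_sum_perm_apply g j
  have : Nonempty α := ⟨j⟩
  have : (Fintype.card α : ℝ) ≠ 0 := Nat.cast_ne_zero.mpr Fintype.card_ne_zero
  simp only [nsmul_eq_mul] at h
  field_simp
  linarith

theorem sum_pushforward_apply {α : Type*} [Fintype α] [DecidableEq α] (F : Perm α → ℝ) (k : α) :
    ∑ j, pushforward (· j) F k = ∑ σ, F σ := by
  simp only [pushforward, sum_filter]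
  rw [sum_comm]
  refine sum_congr rfl fun σ _ ↦ ?_
  simp [← Equiv.eq_symm_apply]

section decomposeFin

variable {n : ℕ}

/-- `decomposeFin.symm (c, τ)` sends `0 ↦ c` and `i.succ ↦ swap 0 c (τ i).succ`, so `condZero F c`
is `F` conditioned on `σ 0 = c`, written in the coordinate `τ`. -/
noncomputable def condZero (F : Perm (Fin (n + 1)) → ℝ) (c : Fin (n + 1)) (τ : Perm (Fin n)) :
    ℝ :=
  F (Perm.decomposeFin.symm (c, τ)) / pushforward (· 0) F c

theorem pushforward_zero_eq_sum (F : Perm (Fin (n + 1)) → ℝ) (c : Fin (n + 1)) :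
    pushforward (· 0) F c = ∑ τ, F (Perm.decomposeFin.symm (c, τ)) := by
  rw [← pushforward_comp_equiv Perm.decomposeFin.symm, ← sum_pushforward_prod,
    Fintype.sum_eq_single c fun c' hc' ↦ ?_]
  · simp [pushforward]
  · simp [pushforward, hc']

theorem mul_condZero {F : Perm (Fin (n + 1)) → ℝ} (hF : ∀ σ, 0 ≤ F σ) (c : Fin (n + 1))
    (τ : Perm (Fin n)) :
    pushforward (· 0) F c * condZero F c τ = F (Perm.decomposeFin.symm (c, τ)) := by
  rcases eq_or_ne (pushforward (· 0) F c) 0 with h | h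
  · rw [h, zero_mul, eq_comm]
    rw [pushforward_zero_eq_sum] at h
    exact (sum_eq_zero_iff_of_nonneg fun τ _ ↦ hF _).mp h τ (mem_univ τ)
  · exact mul_div_cancel₀ _ h

theorem condZero_nonneg {F : Perm (Fin (n + 1)) → ℝ} (hF : ∀ σ, 0 ≤ F σ) (c : Fin (n + 1))
    (τ : Perm (Fin n)) : 0 ≤ condZero F c τ :=
  div_nonneg (hF _) (pushforward_nonneg hF c)

theorem sum_condZero {F : Perm (Fin (n + 1)) → ℝ} {c : Fin (n + 1)}
    (hc : pushforward (· 0) F c ≠ 0) : ∑ τ, condZero F c τ = 1 := by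
  simp only [condZero]
  rw [← sum_div, ← pushforward_zero_eq_sum, div_self hc]

theorem klUniform_eq_add_sum_condZero {F : Perm (Fin (n + 1)) → ℝ} (hF : ∀ σ, 0 ≤ F σ) :
    klUniform F = klUniform (pushforward (· 0) F) +
      ∑ c, pushforward (· 0) F c * klUniform (condZero F c) := by
  rw [← klUniform_comp_equiv Perm.decomposeFin.symm, klUniform_prod (F := F ∘ _) fun _ ↦ hF _]
  simp only [Function.comp_apply, ← pushforward_zero_eq_sum]
  rfl

theorem sum_mul_pushforward_condZero {F : Perm (Fin (n + 1)) → ℝ} (hF : ∀ σ, 0 ≤ F σ)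
    (i : Fin n) (k : Fin (n + 1)) :
    ∑ c, pushforward (· 0) F c *
        pushforward (fun x ↦ swap 0 c x.succ) (pushforward (· i) (condZero F c)) k =
      pushforward (· i.succ) F k := by
  simp_rw [← pushforward_const_mul, ← pushforward_comp, Function.comp_def, mul_condZero hF]
  rw [← pushforward_comp_equiv Perm.decomposeFin.symm, ← sum_pushforward_prod]
  simp [Perm.decomposeFin_symm_apply_succ]

theorem klUniform_pushforward_succ_le {F : Perm (Fin (n + 1)) → ℝ} (hF : ∀ σ, 0 ≤ F σ)
    (hF1 : ∑ σ, F σ = 1) (i : Fin n) :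
    klUniform (pushforward (· i.succ) F) ≤
      ∑ c, pushforward (· 0) F c * klUniform (pushforward (· i) (condZero F c)) +
        log ((n + 1) / n) +
          ∑ k, pushforward (· i.succ) F k * log (1 - pushforward (· 0) F k) := by
  set p := pushforward (· 0) F
  set q := fun c ↦ pushforward (· i) (condZero F c)
  set φ := fun (c : Fin (n + 1)) (x : Fin n) ↦ swap 0 c x.succ
  have hφ : ∀ c, (φ c).Injective := fun c x y h ↦ Fin.succ_injective _ ((swap 0 c).injective h)
  have hφc : ∀ c, c ∉ Set.range (φ c) := fun c ⟨x, hx⟩ ↦ by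
    simp [φ, swap_apply_eq_iff] at hx
  -- the joint law of `(σ 0, σ i.succ)`
  set J := fun c k ↦ p c * pushforward (φ c) (q c) k
  have hp0 : ∀ c, 0 ≤ p c := pushforward_nonneg hF
  have hp1 : ∑ c, p c = 1 := (sum_pushforward _ F).trans hF1
  have hq1 : ∀ c, p c ≠ 0 → ∑ x, q c x = 1 := fun c hc ↦
    (sum_pushforward _ _).trans (sum_condZero hc)
  have hJ : ∀ c k, 0 ≤ J c k := fun c k ↦ mul_nonneg (hp0 c)
    (pushforward_nonneg (pushforward_nonneg (condZero_nonneg hF c)) k)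
  have hdiag : ∀ k, J k k = 0 := fun k ↦ by
    simp [J, pushforward_eq_zero_of_notMem_range _ (hφc k)]
  have hrow : ∀ c, ∑ k, J c k = p c := fun c ↦ by
    rw [← mul_sum, sum_pushforward]
    rcases eq_or_ne (p c) 0 with h | h
    · simp [h]
    · rw [hq1 c h, mul_one]
  have hrelabel : ∀ c, ∑ k, J c k * log (J c k / p c) = p c * klUniform (q c) - p c * log n := by
    intro c
    rw [sum_const_mul_pushforward_mul_log (hφ c), klUniform_eq, Fintype.card_fin]
    rcases eq_or_ne (p c) 0 with h | h
    · simp [h]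
    · rw [hq1 c h]; ring
  have hcoupling := sum_mul_log_le_of_diag_eq_zero hJ hdiag hrow
    (sum_mul_pushforward_condZero hF i) hp1
  simp only [hrelabel, sum_sub_distrib, ← sum_mul, hp1, one_mul] at hcoupling
  have hn : (0 : ℝ) < n := Nat.cast_pos.mpr i.pos
  rw [klUniform_eq, sum_pushforward, hF1, Fintype.card_fin, log_div (by positivity) hn.ne']
  push_cast
  linarith

end decomposeFin

theorem sum_klUniform_pushforward_le {N : ℕ} {F : Perm (Fin N) → ℝ} (hF : ∀ σ, 0 ≤ F σ)
    (hF1 : ∑ σ, F σ = 1) :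
    ∑ j, klUniform (pushforward (· j) F) ≤ 2 * klUniform F := by
  induction N with
  | zero => simpa using mul_nonneg zero_le_two (klUniform_nonneg hF hF1)
  | succ n ih =>
    rw [Fin.sum_univ_succ, klUniform_eq_add_sum_condZero hF]
    set p := pushforward (· 0) F
    have hp1 : ∑ c, p c = 1 := (sum_pushforward _ F).trans hF1
    have hcond : ∀ c, p c * ∑ i, klUniform (pushforward (· i) (condZero F c)) ≤
        2 * (p c * klUniform (condZero F c)) := fun c ↦ by
      rw [mul_left_comm]
      rcases eq_or_ne (p c) 0 with h | h
      · simp [h]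
      · exact mul_le_mul_of_nonneg_left (ih (condZero_nonneg hF c) (sum_condZero h))
          (pushforward_nonneg hF c)
    have hpositions := sum_le_sum fun i (_ : i ∈ univ) ↦ klUniform_pushforward_succ_le hF hF1 i
    have hmass : ∀ k, ∑ i : Fin n, pushforward (· i.succ) F k = 1 - p k := fun k ↦ by
      have := sum_pushforward_apply F k
      rw [Fin.sum_univ_succ, hF1] at this
      linarith
    simp only [sum_add_distrib, sum_const, card_univ, Fintype.card_fin, nsmul_eq_mul] at hpositions
    rw [sum_comm (f := fun i c ↦ p c * _), sum_comm (f := fun i k ↦ _ * log (1 - p k))]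
      at hpositions
    simp only [← mul_sum, ← sum_mul, hmass] at hpositions
    have hbracket := mul_log_add_sum_mul_log_one_sub_le_klUniform (Fintype.card_fin _)
      (pushforward_nonneg hF) hp1
    have hconds := sum_le_sum fun c (_ : c ∈ univ) ↦ hcond c
    rw [← mul_sum] at hconds
    linarith

theorem two_mul_log_le_sum_log {N : ℕ} {f : Fin N → Fin N → ℝ} (hf : ∀ j k, 0 ≤ f j k)
    (hS : 0 < ∑ σ : Perm (Fin N), ∏ j, f j (σ j)) :
    2 * log ((∑ σ : Perm (Fin N), ∏ j, f j (σ j)) / N.factorial) ≤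
      ∑ j, log ((∑ k, f j k ^ 2) / N) := by
  set F := fun σ : Perm (Fin N) ↦ (∏ j, f j (σ j)) / ∑ σ' : Perm (Fin N), ∏ j, f j (σ' j)
  have hF0 : ∀ σ, 0 ≤ F σ := fun σ ↦ div_nonneg (prod_nonneg fun j _ ↦ hf j _) hS.le
  have hF1 : ∑ σ, F σ = 1 := by rw [← sum_div, div_self hS.ne']
  have hsupp : ∀ σ, F σ ≠ 0 → ∀ j, f j (σ j) ≠ 0 := fun σ h j ↦
    prod_ne_zero_iff.mp (left_ne_zero_of_mul h) j (mem_univ j)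
  have hmarg : ∀ j k, pushforward (· j) F k ≠ 0 → f j k ^ 2 ≠ 0 := fun j k h ↦ by
    obtain ⟨σ, hσ, hFσ⟩ := exists_ne_zero_of_sum_ne_zero h
    rw [← (mem_filter.mp hσ).2]
    exact pow_ne_zero 2 (hsupp σ hFσ j)
  have hgibbs : ∀ j, 2 * ∑ k, pushforward (· j) F k * log (f j k) ≤
      klUniform (pushforward (· j) F) + log ((∑ k, f j k ^ 2) / N) := fun j ↦ by
    have h := sum_mul_log_le_klUniform_add (pushforward_nonneg hF0)
      ((sum_pushforward _ F).trans hF1) (fun k ↦ sq_nonneg (f j k)) (hmarg j)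
    simp only [log_pow, Fintype.card_fin] at h
    rw [mul_sum]
    convert h using 2
    push_cast
    ring
  have hkl : klUniform F = ∑ σ, F σ * log (∏ j, f j (σ j)) -
      log ((∑ σ : Perm (Fin N), ∏ j, f j (σ j)) / Fintype.card (Perm (Fin N))) :=
    klUniform_div_sum hS
  have hlog : ∑ σ, F σ * log (∏ j, f j (σ j)) = ∑ j, ∑ k, pushforward (· j) F k * log (f j k) :=
    sum_mul_log_prod (X := fun j (σ : Perm (Fin N)) ↦ σ j) hsupp
  rw [hlog, Fintype.card_perm, Fintype.card_fin] at hkl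
  have hcll := sum_klUniform_pushforward_le hF0 hF1
  have := sum_le_sum fun j (_ : j ∈ univ) ↦ hgibbs j
  rw [← mul_sum, sum_add_distrib] at this
  linarith

theorem sym_group_brascamp_lieb {N : ℕ} (f : Fin N → Fin N → ℝ)
    (hf : ∀ j k, 0 ≤ f j k) :
    (1 / (N.factorial : ℝ)) * ∑ σ : Equiv.Perm (Fin N), ∏ j, f j (σ j) ≤
      ∏ j, Real.sqrt ((1 / (N.factorial : ℝ)) *
        ∑ σ : Equiv.Perm (Fin N), (f j (σ j)) ^ 2) := by
  rcases (sum_nonneg fun (σ : Equiv.Perm (Fin N)) _ ↦ prod_nonneg fun j _ ↦ hf j (σ j)).eq_or_lt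
    with hS | hS
  · rw [← hS, mul_zero]
    exact prod_nonneg fun j _ ↦ sqrt_nonneg _
  have hA : ∀ j, 0 < (∑ k, f j k ^ 2) / N := fun j ↦ by
    obtain ⟨σ, -, hσ⟩ := exists_ne_zero_of_sum_ne_zero hS.ne'
    have hfj : f j (σ j) ≠ 0 := prod_ne_zero_iff.mp hσ j (mem_univ j)
    have : 0 < ∑ k, f j k ^ 2 :=
      sum_pos' (fun k _ ↦ sq_nonneg _) ⟨σ j, mem_univ _, by positivity⟩
    have : (0 : ℝ) < N := Nat.cast_pos.mpr j.pos
    positivity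
  have havg := fun j ↦ one_div_factorial_mul_sum_perm_apply (fun k ↦ f j k ^ 2) j
  simp only [Fintype.card_fin] at havg
  simp_rw [havg]
  rw [← log_le_log_iff (mul_pos (by positivity) hS) (prod_pos fun j _ ↦ sqrt_pos.mpr (hA j)),
    log_prod fun j _ ↦ (sqrt_pos.mpr (hA j)).ne']
  simp_rw [log_sqrt (hA _).le, one_div_mul_eq_div]
  have := two_mul_log_le_sum_log hf hS
  rw [← sum_div]
  linarith
end

section
/- For any two vectors f_1, f_2 in ℂ^N, ∑_{1≤i<j≤N} |f_{1,i} f_{2,j} + f_{1,j} f_{2,i}|² ≤ 2·((N−1)/N)·|f_1|²·|f_2|², where |f| denotes the Euclidean norm. -/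
/-!
Summing the symmetric function `‖a i b j + a j b i‖²` over all pairs gives
`2‖a‖²‖b‖² + 2|⟨a, b⟩|²`; removing the diagonal and halving, the sum over `i < j` is
`‖a‖²‖b‖² + |⟨a, b⟩|² - 2T` with `T = ∑ |a i|² |b i|²`. With `P = (∑ |a i| |b i|)²`,
Cauchy–Schwarz gives `|⟨a, b⟩|² ≤ P ≤ ‖a‖²‖b‖²` and `P ≤ N T`, so
`|⟨a, b⟩|² - 2T ≤ (1 - 2/N) P ≤ (1 - 2/N) ‖a‖²‖b‖²`.
-/

open scoped BigOperators

/-- Euclidean norm of a vector in `ℂ^N`. -/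
noncomputable def enorm' {N : ℕ} (f : Fin N → ℂ) : ℝ :=
  Real.sqrt (∑ i, ‖f i‖ ^ 2)

open Finset RCLike ComplexConjugate

theorem sum_prod_eq_two_nsmul_sum_lt_add_sum_diag {ι M : Type*} [Fintype ι] [LinearOrder ι]
    [AddCommMonoid M] (g : ι × ι → M) (hg : ∀ i j, g (i, j) = g (j, i)) :
    ∑ p, g p = 2 • ∑ p ∈ univ.filter (fun p : ι × ι => p.1 < p.2), g p + ∑ i, g (i, i) := by
  have htri : ∀ p : ι × ι, g p = ((if p.1 < p.2 then g p else 0) +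
      (if p.2 < p.1 then g p else 0)) + (if p.1 = p.2 then g p else 0) := by
    rintro ⟨i, j⟩
    rcases lt_trichotomy i j with h | rfl | h
    · simp [h, h.not_gt, h.ne]
    · simp
    · simp [h, h.not_gt, h.ne']
  have hswap : ∑ p ∈ univ.filter (fun p : ι × ι => p.2 < p.1), g p =
      ∑ p ∈ univ.filter (fun p : ι × ι => p.1 < p.2), g p :=
    sum_equiv (Equiv.prodComm ι ι) (by simp) (fun p _ => hg p.1 p.2)
  have hdiag : ∑ p ∈ univ.filter (fun p : ι × ι => p.1 = p.2), g p = ∑ i, g (i, i) := by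
    rw [sum_filter, Fintype.sum_prod_type]
    simp
  rw [sum_congr rfl fun p _ => htri p, sum_add_distrib, sum_add_distrib, ← sum_filter,
    ← sum_filter, ← sum_filter, hswap, hdiag, two_nsmul]

variable {𝕜 ι : Type*} [RCLike 𝕜] [Fintype ι]

theorem norm_mul_add_mul_sq (a b c d : 𝕜) :
    ‖a * b + c * d‖ ^ 2 = ‖a‖ ^ 2 * ‖b‖ ^ 2 + ‖c‖ ^ 2 * ‖d‖ ^ 2 +
      2 * re (a * conj d * (conj c * b)) := by
  rw [← normSq_eq_def', normSq_add, normSq_eq_def', normSq_eq_def', norm_mul, norm_mul,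
    map_mul (starRingEnd 𝕜)]
  ring_nf

theorem sum_sum_re_mul_conj (u : ι → 𝕜) :
    ∑ i, ∑ j, re (u i * conj (u j)) = ‖∑ i, u i‖ ^ 2 := by
  rw [← ofReal_re (K := 𝕜) (‖_‖ ^ 2), ofReal_pow, ← mul_conj, map_sum, sum_mul_sum, map_sum]
  simp only [map_sum]

theorem sum_sum_norm_mul_add_mul_sq (a b : ι → 𝕜) :
    ∑ i, ∑ j, ‖a i * b j + a j * b i‖ ^ 2 =
      2 * ((∑ i, ‖a i‖ ^ 2) * ∑ i, ‖b i‖ ^ 2) + 2 * ‖∑ i, a i * conj (b i)‖ ^ 2 := by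
  have hconj : ∀ i j, a i * conj (b i) * (conj (a j) * b j) =
      a i * conj (b i) * conj (a j * conj (b j)) := by
    simp
  simp only [norm_mul_add_mul_sq, sum_add_distrib, ← mul_sum, hconj, sum_sum_re_mul_conj]
  rw [sum_comm (f := fun i j => ‖a j‖ ^ 2 * ‖b i‖ ^ 2), ← sum_mul_sum, ← sum_mul]
  ring

theorem sum_lt_norm_mul_add_mul_sq [LinearOrder ι] (a b : ι → 𝕜) :
    ∑ p ∈ univ.filter (fun p : ι × ι => p.1 < p.2), ‖a p.1 * b p.2 + a p.2 * b p.1‖ ^ 2 =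
      (∑ i, ‖a i‖ ^ 2) * (∑ i, ‖b i‖ ^ 2) + ‖∑ i, a i * conj (b i)‖ ^ 2 -
        2 * ∑ i, ‖a i‖ ^ 2 * ‖b i‖ ^ 2 := by
  have h := sum_prod_eq_two_nsmul_sum_lt_add_sum_diag
    (fun p : ι × ι => ‖a p.1 * b p.2 + a p.2 * b p.1‖ ^ 2) (fun i j => by rw [add_comm])
  have hdiag : ∀ i, ‖a i * b i + a i * b i‖ ^ 2 = 4 * (‖a i‖ ^ 2 * ‖b i‖ ^ 2) := by
    intro i
    rw [← two_mul, norm_mul, norm_mul, RCLike.norm_two]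
    ring
  simp only [Fintype.sum_prod_type, sum_sum_norm_mul_add_mul_sq, hdiag, ← mul_sum,
    nsmul_eq_mul, Nat.cast_ofNat] at h
  linarith

theorem sum_lt_norm_mul_add_mul_sq_le [LinearOrder ι] (hι : 2 ≤ Fintype.card ι) (a b : ι → 𝕜) :
    ∑ p ∈ univ.filter (fun p : ι × ι => p.1 < p.2), ‖a p.1 * b p.2 + a p.2 * b p.1‖ ^ 2 ≤
      2 * (((Fintype.card ι : ℝ) - 1) / Fintype.card ι) * (∑ i, ‖a i‖ ^ 2) *
        ∑ i, ‖b i‖ ^ 2 := by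
  have hn : (2 : ℝ) ≤ Fintype.card ι := by exact_mod_cast hι
  have hSP : ‖∑ i, a i * conj (b i)‖ ^ 2 ≤ (∑ i, ‖a i‖ * ‖b i‖) ^ 2 := by
    gcongr
    refine (norm_sum_le _ _).trans_eq ?_
    simp only [norm_mul, norm_conj]
  have hPA : (∑ i, ‖a i‖ * ‖b i‖) ^ 2 ≤ (∑ i, ‖a i‖ ^ 2) * ∑ i, ‖b i‖ ^ 2 :=
    sum_mul_sq_le_sq_mul_sq _ _ _
  have hPn : (∑ i, ‖a i‖ * ‖b i‖) ^ 2 ≤ Fintype.card ι * ∑ i, ‖a i‖ ^ 2 * ‖b i‖ ^ 2 := by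
    simpa only [mul_pow, card_univ] using
      sq_sum_le_card_mul_sum_sq (s := univ) (f := fun i => ‖a i‖ * ‖b i‖)
  rw [sum_lt_norm_mul_add_mul_sq, mul_div_assoc', div_mul_eq_mul_div, div_mul_eq_mul_div,
    le_div_iff₀ (by linarith)]
  nlinarith [mul_le_mul_of_nonneg_left hPA (by linarith : (0 : ℝ) ≤ Fintype.card ι - 2)]

theorem enorm'_sq {N : ℕ} (f : Fin N → ℂ) : enorm' f ^ 2 = ∑ i, ‖f i‖ ^ 2 :=
  Real.sq_sqrt (sum_nonneg fun _ _ => sq_nonneg _)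

theorem two_by_two_permanent_sum_bound {N : ℕ} (f₁ f₂ : Fin N → ℂ) :
    ∑ p ∈ Finset.univ.filter (fun p : Fin N × Fin N => p.1 < p.2),
        ‖f₁ p.1 * f₂ p.2 + f₁ p.2 * f₂ p.1‖ ^ 2 ≤
      2 * (((N : ℝ) - 1) / N) * enorm' f₁ ^ 2 * enorm' f₂ ^ 2 := by
  rcases lt_or_ge N 2 with hN | hN
  · have hempty : univ.filter (fun p : Fin N × Fin N => p.1 < p.2) = ∅ :=
      filter_eq_empty_iff.2 fun p _ h => by omega
    interval_cases N <;> simp [hempty]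
  · simpa only [enorm'_sq, Fintype.card_fin] using
      sum_lt_norm_mul_add_mul_sq_le (by simpa using hN) f₁ f₂
end

section
/- With C(p) = sup over nonzero f_1,…,f_N ∈ ℂ^N of |perm[f_1,…,f_N]| / ∏_j |f_j|_p, for all 1 ≤ p ≤ 2 one has C(p) ≤ (N!/N^{N/2})^{2−2/p}. -/
open scoped BigOperators

/-- The `ℓ^p` norm of a vector in `ℂ^N`. -/
noncomputable def lpnorm {N : ℕ} (p : ℝ) (f : Fin N → ℂ) : ℝ :=
  (∑ k, ‖f k‖ ^ p) ^ (1 / p)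

/-- `C(p)`: the best constant in `|perm F| ≤ C(p) ∏_j |f_j|_p`
over nonzero columns `f_j`. -/
noncomputable def Cp (N : ℕ) (p : ℝ) : ℝ :=
  sSup {r : ℝ | ∃ f : Fin N → Fin N → ℂ, (∀ j, f j ≠ 0) ∧
    r = ‖perm (fun i j => f j i)‖ / ∏ j, lpnorm p (f j)}

/-!
Put `a i j = |f_j i| / |f_j|_p` and `θ = 2 - 2/p ∈ [0, 1]`. Entrywise
`a = (a ^ p) ^ (1 - θ) * (a ^ (p / 2)) ^ θ`, so Hölder's inequality over the permutations gives
`perm a ≤ perm (a ^ p) ^ (1 - θ) * perm (a ^ (p / 2)) ^ θ`. The columns of `a ^ p` have ℓ¹ norm `1`,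
whence `perm (a ^ p) ≤ 1`, and those of `a ^ (p / 2)` are ℓ² unit vectors, whence
`perm (a ^ (p / 2)) ≤ N! / N ^ (N / 2)`.

That last bound, for nonnegative matrices with ℓ² unit columns, is proved variationally. If `A`
maximizes the permanent on that compact set, then in each column `j` the permanent is the linear
form `x ↦ perm A * ⟪x, A_j⟫` (test column `j` against the unit vector along its cofactor vector).
Consequently, replacing two columns by the unit vector along their sum keeps the permanent maximal,
while it strictly increases `‖∑_j A_j‖²` unless the two columns agree. So a maximizer that also
maximizes `‖∑_j A_j‖²` has all columns equal to one unit vector `u ≥ 0`, and then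
`perm A = N! ∏ u_i ≤ N! / N ^ (N / 2)` by AM-GM.
-/

open Finset

theorem Real.sum_rpow_mul_rpow_le {ι : Type*} (s : Finset ι) {u w : ι → ℝ}
    (hu : ∀ i ∈ s, 0 ≤ u i) (hw : ∀ i ∈ s, 0 ≤ w i) {θ : ℝ} (hθ0 : 0 ≤ θ) (hθ1 : θ ≤ 1) :
    ∑ i ∈ s, u i ^ (1 - θ) * w i ^ θ ≤ (∑ i ∈ s, u i) ^ (1 - θ) * (∑ i ∈ s, w i) ^ θ := by
  rcases hθ0.eq_or_lt with rfl | hθ0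
  · simp
  rcases hθ1.eq_or_lt with rfl | hθ1
  · simp
  have hθ1' : 0 < 1 - θ := sub_pos.2 hθ1
  have hholder := Real.inner_le_Lp_mul_Lq_of_nonneg s
    (Real.HolderConjugate.inv_inv hθ1' hθ0 (sub_add_cancel 1 θ))
    (f := fun i => u i ^ (1 - θ)) (g := fun i => w i ^ θ)
    (fun i hi => Real.rpow_nonneg (hu i hi) _) (fun i hi => Real.rpow_nonneg (hw i hi) _)
  have hu' : ∑ i ∈ s, (u i ^ (1 - θ)) ^ (1 - θ)⁻¹ = ∑ i ∈ s, u i := sum_congr rfl fun i hi => by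
    rw [← Real.rpow_mul (hu i hi), mul_inv_cancel₀ hθ1'.ne', Real.rpow_one]
  have hw' : ∑ i ∈ s, (w i ^ θ) ^ θ⁻¹ = ∑ i ∈ s, w i := sum_congr rfl fun i hi => by
    rw [← Real.rpow_mul (hw i hi), mul_inv_cancel₀ hθ0.ne', Real.rpow_one]
  simpa only [hu', hw', one_div, inv_inv] using hholder

theorem Real.prod_le_of_sum_sq_eq_one {n : Type*} [Fintype n] {u : n → ℝ} (hu0 : ∀ i, 0 ≤ u i)
    (hu1 : ∑ i, u i ^ 2 = 1) :
    ∏ i, u i ≤ ((Fintype.card n : ℝ) ^ ((Fintype.card n : ℝ) / 2))⁻¹ := by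
  set N : ℝ := (Fintype.card n : ℝ)
  obtain ⟨i₀, -, -⟩ := exists_ne_zero_of_sum_ne_zero (hu1.trans_ne one_ne_zero)
  have hN : 0 < N := Nat.cast_pos.2 (Fintype.card_pos_iff.2 ⟨i₀⟩)
  have hP : 0 ≤ ∏ i, u i := prod_nonneg fun i _ => hu0 i
  have hamgm : (∏ i, u i ^ 2) ^ N⁻¹ ≤ N⁻¹ := by
    simpa [hu1, N, div_eq_inv_mul] using Real.geom_mean_le_arith_mean univ (fun _ => 1)
      (fun i => u i ^ 2) (fun _ _ => zero_le_one) (by simpa [N] using hN) fun i _ => sq_nonneg _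
  calc ∏ i, u i = ((∏ i, u i ^ 2) ^ N⁻¹) ^ (N / 2) := by
        rw [prod_pow, ← Real.rpow_natCast, ← Real.rpow_mul hP, ← Real.rpow_mul hP]
        field_simp
        simp
    _ ≤ (N⁻¹) ^ (N / 2) := by gcongr
    _ = _ := Real.inv_rpow hN.le _

namespace Matrix

@[simp]
theorem updateCol_transpose_self {n α : Type*} [DecidableEq n] (A : Matrix n n α) (j : n) :
    A.updateCol j (Aᵀ j) = A :=
  updateCol_eq_self A j

theorem sum_updateCol_apply {n α : Type*} [Fintype n] [DecidableEq n] [AddCommGroup α]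
    (A : Matrix n n α) (j : n) (x : n → α) (i : n) :
    ∑ l, A.updateCol j x i l = ∑ l, A i l + (x i - A i j) := by
  simp only [updateCol_apply]
  rw [← sum_erase_add _ _ (mem_univ j), ← sum_erase_add _ (fun l => A i l) (mem_univ j),
    sum_congr rfl fun l hl => if_neg (ne_of_mem_erase hl), if_pos rfl, add_add_sub_cancel]

section CommSemiring

variable {n R : Type*} [Fintype n] [DecidableEq n] [CommSemiring R]

theorem permanent_updateCol_eq_sum_s17 (M : Matrix n n R) (j : n) (x : n → R) :
    (M.updateCol j x).permanent =
      ∑ σ : Equiv.Perm n, x (σ j) * ∏ i ∈ univ.erase j, M (σ i) i := by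
  simp only [permanent, ← mul_prod_erase _ _ (mem_univ j), updateCol_self]
  refine sum_congr rfl fun σ _ => congrArg _ (prod_congr rfl fun i hi => ?_)
  rw [updateCol_ne (ne_of_mem_erase hi)]

noncomputable def permanentCofactor (M : Matrix n n R) (j : n) : n → R :=
  fun i => (M.updateCol j (Pi.single i 1)).permanent

theorem permanent_updateCol_eq_dotProduct (M : Matrix n n R) (j : n) (x : n → R) :
    (M.updateCol j x).permanent = x ⬝ᵥ M.permanentCofactor j := by
  simp only [permanentCofactor, permanent_updateCol_eq_sum_s17, dotProduct, mul_sum]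
  rw [sum_comm]
  refine sum_congr rfl fun σ _ => ?_
  simp [Pi.single_apply]

theorem permanent_updateCol_add (M : Matrix n n R) (j : n) (x y : n → R) :
    (M.updateCol j (x + y)).permanent =
      (M.updateCol j x).permanent + (M.updateCol j y).permanent := by
  simp only [permanent_updateCol_eq_dotProduct, add_dotProduct]

theorem permanent_updateCol_updateCol_swap (M : Matrix n n R) {j k : n} (hjk : j ≠ k)
    (x y : n → R) :
    ((M.updateCol j x).updateCol k y).permanent =
      ((M.updateCol j y).updateCol k x).permanent := by
  rw [← permanent_permute_rows (Equiv.swap j k)]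
  congr 1
  ext i l
  rcases eq_or_ne l j with rfl | hlj
  · simp [hjk]
  rcases eq_or_ne l k with rfl | hlk
  · simp [hjk]
  · simp [Equiv.swap_apply_of_ne_of_ne hlj hlk, hlj, hlk]

theorem permanent_of_cols_eq {M : Matrix n n R} (u : n → R) (hM : ∀ i j, M i j = u i) :
    M.permanent = (Fintype.card n).factorial * ∏ i, u i := by
  simp [permanent, hM, Equiv.prod_comp, Fintype.card_perm]

theorem permanent_of_mul_col (M : Matrix n n R) (c : n → R) :
    (of fun i j => M i j * c j).permanent = (∏ j, c j) * M.permanent := by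
  simp only [permanent, of_apply, prod_mul_distrib, mul_sum]
  exact sum_congr rfl fun σ _ => by rw [mul_comm]

end CommSemiring

section Ordered

variable {n R : Type*} [Fintype n] [DecidableEq n] [CommSemiring R] [PartialOrder R]
  [IsOrderedRing R]

theorem permanent_nonneg_s17 {M : Matrix n n R} (hM : ∀ i j, 0 ≤ M i j) : 0 ≤ M.permanent :=
  sum_nonneg fun _ _ => prod_nonneg fun _ _ => hM _ _

theorem permanent_le_prod_sum {M : Matrix n n R} (hM : ∀ i j, 0 ≤ M i j) :
    M.permanent ≤ ∏ j, ∑ i, M i j :=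
  calc M.permanent
      = ∑ ρ ∈ univ.map ⟨fun σ : Equiv.Perm n => ⇑σ, DFunLike.coe_injective⟩, ∏ j, M (ρ j) j := by
        rw [sum_map]; rfl
    _ ≤ ∑ ρ : n → n, ∏ j, M (ρ j) j :=
        sum_le_sum_of_subset_of_nonneg (subset_univ _) fun _ _ _ => prod_nonneg fun _ _ => hM _ _
    _ = ∏ j, ∑ i, M i j := (Fintype.prod_sum fun j i => M i j).symm

end Ordered

theorem norm_permanent_le_s17 {n R : Type*} [Fintype n] [DecidableEq n] [NormedCommRing R]
    [NormOneClass R] (M : Matrix n n R) : ‖M.permanent‖ ≤ (M.map norm).permanent :=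
  (norm_sum_le _ _).trans (sum_le_sum fun _ _ => Finset.norm_prod_le _ _)

theorem permanent_rpow_mul_rpow_le {n : Type*} [Fintype n] [DecidableEq n] {P Q : Matrix n n ℝ}
    (hP : ∀ i j, 0 ≤ P i j) (hQ : ∀ i j, 0 ≤ Q i j) {θ : ℝ} (hθ0 : 0 ≤ θ) (hθ1 : θ ≤ 1) :
    (of fun i j => P i j ^ (1 - θ) * Q i j ^ θ).permanent ≤
      P.permanent ^ (1 - θ) * Q.permanent ^ θ :=
  calc (of fun i j => P i j ^ (1 - θ) * Q i j ^ θ).permanent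
      = ∑ σ : Equiv.Perm n, (∏ i, P (σ i) i) ^ (1 - θ) * (∏ i, Q (σ i) i) ^ θ := by
        refine sum_congr rfl fun σ _ => ?_
        rw [← Real.finsetProd_rpow _ _ (fun _ _ => hP _ _),
          ← Real.finsetProd_rpow _ _ (fun _ _ => hQ _ _), ← prod_mul_distrib]
        rfl
    _ ≤ P.permanent ^ (1 - θ) * Q.permanent ^ θ :=
        Real.sum_rpow_mul_rpow_le _ (fun _ _ => prod_nonneg fun _ _ => hP _ _)
          (fun _ _ => prod_nonneg fun _ _ => hQ _ _) hθ0 hθ1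

section UnitColumns

variable {n : Type*} [Fintype n]

theorem dotProduct_add_self (x y : n → ℝ) :
    (x + y) ⬝ᵥ (x + y) = x ⬝ᵥ x + 2 * (x ⬝ᵥ y) + y ⬝ᵥ y := by
  simp only [add_dotProduct, dotProduct_add, dotProduct_comm y x]
  ring

/-- The unit vector along `x` (junk value `0` at `x = 0`). -/
noncomputable def l2Normalize (x : n → ℝ) : n → ℝ := (√(x ⬝ᵥ x))⁻¹ • x

theorem l2Normalize_nonneg {x : n → ℝ} (hx : ∀ i, 0 ≤ x i) (i : n) : 0 ≤ l2Normalize x i :=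
  mul_nonneg (inv_nonneg.2 (Real.sqrt_nonneg _)) (hx i)

theorem l2Normalize_dotProduct {x : n → ℝ} (hx : 0 < x ⬝ᵥ x) :
    l2Normalize x ⬝ᵥ x = √(x ⬝ᵥ x) := by
  rw [l2Normalize, smul_dotProduct, smul_eq_mul, inv_mul_eq_iff_eq_mul₀ (Real.sqrt_pos.2 hx).ne',
    Real.mul_self_sqrt hx.le]

theorem l2Normalize_dotProduct_self {x : n → ℝ} (hx : 0 < x ⬝ᵥ x) :
    l2Normalize x ⬝ᵥ l2Normalize x = 1 := by
  rw [l2Normalize, dotProduct_smul, ← l2Normalize, l2Normalize_dotProduct hx, smul_eq_mul,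
    inv_mul_cancel₀ (Real.sqrt_pos.2 hx).ne']

def unitNonnegCols (n : Type*) [Fintype n] : Set (Matrix n n ℝ) :=
  {A | (∀ i j, 0 ≤ A i j) ∧ ∀ j, Aᵀ j ⬝ᵥ Aᵀ j = 1}

theorem isCompact_unitNonnegCols : IsCompact (unitNonnegCols n) := by
  refine (isCompact_univ_pi fun _ => isCompact_univ_pi fun _ => isCompact_Icc (a := (0 : ℝ))
    (b := 1)).of_isClosed_subset ?_ fun A ⟨hA0, hA1⟩ => ?_
  · simp only [unitNonnegCols, Set.ofPred_and, Set.ofPred_forall]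
    refine (isClosed_iInter fun i => isClosed_iInter fun j => isClosed_le ?_ ?_).inter
      (isClosed_iInter fun j => isClosed_eq ?_ ?_) <;> fun_prop
  · simp only [Set.mem_pi, Set.mem_univ, true_implies, Set.mem_Icc]
    refine fun i j => ⟨hA0 i j, ?_⟩
    have : A i j * A i j ≤ 1 :=
      hA1 j ▸ single_le_sum (f := fun i => A i j * A i j) (fun _ _ => mul_self_nonneg _)
        (mem_univ i)
    nlinarith [hA0 i j]

theorem unitNonnegCols_nonempty : (unitNonnegCols n).Nonempty := by
  refine ⟨of fun _ _ => (√(Fintype.card n))⁻¹, fun _ _ => inv_nonneg.2 (Real.sqrt_nonneg _),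
    fun j => ?_⟩
  have hn : (0 : ℝ) < Fintype.card n := Nat.cast_pos.2 (Fintype.card_pos_iff.2 ⟨j⟩)
  simp [dotProduct, ← sq, Real.sq_sqrt hn.le, hn.ne']

theorem two_le_dotProduct_add_self_of_mem {A : Matrix n n ℝ} (hA : A ∈ unitNonnegCols n)
    (j k : n) : 2 ≤ (Aᵀ j + Aᵀ k) ⬝ᵥ (Aᵀ j + Aᵀ k) := by
  rw [dotProduct_add_self, hA.2 j, hA.2 k]
  have : 0 ≤ Aᵀ j ⬝ᵥ Aᵀ k := sum_nonneg fun i _ => mul_nonneg (hA.1 i j) (hA.1 i k)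
  linarith

theorem dotProduct_transpose_lt_one {A : Matrix n n ℝ} (hA : A ∈ unitNonnegCols n) {j k : n}
    (hne : Aᵀ j ≠ Aᵀ k) : Aᵀ j ⬝ᵥ Aᵀ k < 1 := by
  have hpos : 0 < (Aᵀ j - Aᵀ k) ⬝ᵥ (Aᵀ j - Aᵀ k) :=
    (by simpa using dotProduct_star_self_nonneg (Aᵀ j - Aᵀ k) : (0 : ℝ) ≤ _).lt_of_ne
      fun h => hne (sub_eq_zero.1 (dotProduct_self_eq_zero.1 h.symm))
  simp only [sub_dotProduct, dotProduct_sub, hA.2 j, hA.2 k, dotProduct_comm (Aᵀ k)] at hpos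
  linarith

noncomputable def sqNormColSum (A : Matrix n n ℝ) : ℝ := ∑ i, (∑ j, A i j) ^ 2

theorem continuous_sqNormColSum : Continuous (sqNormColSum : Matrix n n ℝ → ℝ) := by
  unfold sqNormColSum; fun_prop

variable [DecidableEq n]

theorem continuous_permanent : Continuous (permanent : Matrix n n ℝ → ℝ) := by
  unfold permanent; fun_prop

theorem updateCol_mem_unitNonnegCols {A : Matrix n n ℝ} (hA : A ∈ unitNonnegCols n) (j : n)
    {x : n → ℝ} (hx0 : ∀ i, 0 ≤ x i) (hx1 : x ⬝ᵥ x = 1) :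
    A.updateCol j x ∈ unitNonnegCols n := by
  refine ⟨fun i k => ?_, fun k => ?_⟩
  · rcases eq_or_ne k j with rfl | hk
    · simpa using hx0 i
    · simpa [hk] using hA.1 i k
  · rcases eq_or_ne k j with rfl | hk
    · simpa [← updateRow_transpose] using hx1
    · simpa [← updateRow_transpose, hk] using hA.2 k

theorem permanentCofactor_eq_smul_of_isMaxOn {A : Matrix n n ℝ} (hA : A ∈ unitNonnegCols n)
    (hmax : IsMaxOn permanent (unitNonnegCols n) A) (j : n) :
    A.permanentCofactor j = A.permanent • Aᵀ j := by
  set w := A.permanentCofactor j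
  set M := A.permanent
  have hw0 : ∀ i, 0 ≤ w i := fun i => permanent_nonneg_s17 fun r c => by
    rcases eq_or_ne c j with rfl | hc
    · simp only [updateCol_self, Pi.single_apply]; split_ifs <;> norm_num
    · simpa [hc] using hA.1 r c
  have hMw : Aᵀ j ⬝ᵥ w = M := by
    rw [← permanent_updateCol_eq_dotProduct, updateCol_transpose_self]
  -- test column `j` against the unit vector along `w`
  have hww : w ⬝ᵥ w ≤ M ^ 2 := by
    have ht0 : 0 ≤ w ⬝ᵥ w := by simpa using dotProduct_star_self_nonneg w
    rcases ht0.eq_or_lt with ht | ht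
    · exact ht ▸ sq_nonneg M
    have hwM : √(w ⬝ᵥ w) ≤ M := by
      rw [← l2Normalize_dotProduct ht, ← permanent_updateCol_eq_dotProduct]
      exact hmax (updateCol_mem_unitNonnegCols hA j (l2Normalize_nonneg hw0)
        (l2Normalize_dotProduct_self ht))
    simpa [Real.sq_sqrt ht0] using pow_le_pow_left₀ (Real.sqrt_nonneg _) hwM 2
  have hdist : (w - M • Aᵀ j) ⬝ᵥ (w - M • Aᵀ j) = w ⬝ᵥ w - M ^ 2 := by
    simp only [sub_dotProduct, dotProduct_sub, smul_dotProduct, dotProduct_smul, smul_eq_mul,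
      dotProduct_comm w (Aᵀ j), hMw, hA.2 j]
    ring
  refine sub_eq_zero.1 (dotProduct_self_eq_zero.1 (le_antisymm ?_ ?_))
  · linarith
  · simpa using dotProduct_star_self_nonneg (w - M • Aᵀ j)

theorem permanent_updateCol_of_isMaxOn {A : Matrix n n ℝ} (hA : A ∈ unitNonnegCols n)
    (hmax : IsMaxOn permanent (unitNonnegCols n) A) (j : n) (x : n → ℝ) :
    (A.updateCol j x).permanent = A.permanent * (x ⬝ᵥ Aᵀ j) := by
  rw [permanent_updateCol_eq_dotProduct, permanentCofactor_eq_smul_of_isMaxOn hA hmax,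
    dotProduct_smul, smul_eq_mul]

noncomputable def mergeCols (A : Matrix n n ℝ) (j k : n) : Matrix n n ℝ :=
  (A.updateCol j (l2Normalize (Aᵀ j + Aᵀ k))).updateCol k (l2Normalize (Aᵀ j + Aᵀ k))

theorem mergeCols_mem {A : Matrix n n ℝ} (hA : A ∈ unitNonnegCols n) (j k : n) :
    mergeCols A j k ∈ unitNonnegCols n := by
  have hs := l2Normalize_dotProduct_self
    (zero_lt_two.trans_le (two_le_dotProduct_add_self_of_mem hA j k))
  have hs0 := l2Normalize_nonneg fun i => add_nonneg (hA.1 i j) (hA.1 i k)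
  exact updateCol_mem_unitNonnegCols (updateCol_mem_unitNonnegCols hA j hs0 hs) k hs0 hs

theorem permanent_updateCol_updateCol_add_of_isMaxOn {A : Matrix n n ℝ}
    (hA : A ∈ unitNonnegCols n) (hmax : IsMaxOn permanent (unitNonnegCols n) A) {j k : n}
    (hjk : j ≠ k) :
    ((A.updateCol j (Aᵀ j + Aᵀ k)).updateCol k (Aᵀ j + Aᵀ k)).permanent =
      A.permanent * ((Aᵀ j + Aᵀ k) ⬝ᵥ (Aᵀ j + Aᵀ k)) := by
  set a := Aᵀ j
  set b := Aᵀ k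
  set B : (n → ℝ) → (n → ℝ) → ℝ := fun x y => ((A.updateCol j x).updateCol k y).permanent
  have hB_add_left : ∀ x₁ x₂ y, B (x₁ + x₂) y = B x₁ y + B x₂ y := fun x₁ x₂ y => by
    simp only [B, updateCol_comm _ hjk, permanent_updateCol_add]
  have hB_add_right : ∀ x y₁ y₂, B x (y₁ + y₂) = B x y₁ + B x y₂ := fun x y₁ y₂ =>
    permanent_updateCol_add _ _ _ _
  have haa : B a a = A.permanent * (a ⬝ᵥ b) := by
    rw [← permanent_updateCol_of_isMaxOn hA hmax k]
    simp only [B, a, updateCol_transpose_self]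
  have hbb : B b b = A.permanent * (a ⬝ᵥ b) := by
    rw [dotProduct_comm, ← permanent_updateCol_of_isMaxOn hA hmax j]
    refine congrArg permanent ?_
    conv_rhs => rw [← updateCol_eq_self (A.updateCol j b) k]
    congr 1
    ext i
    simp [b, updateCol_ne hjk.symm]
  have hab : B a b = A.permanent := by
    simp only [B, a, b, updateCol_transpose_self]
  have hba : B b a = A.permanent := by
    simp only [B]; rw [permanent_updateCol_updateCol_swap _ hjk]; exact hab
  change B (a + b) (a + b) = _
  rw [hB_add_left, hB_add_right, hB_add_right, haa, hbb, hab, hba, dotProduct_add_self,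
    hA.2 j, hA.2 k]
  ring

theorem permanent_mergeCols_of_isMaxOn {A : Matrix n n ℝ} (hA : A ∈ unitNonnegCols n)
    (hmax : IsMaxOn permanent (unitNonnegCols n) A) {j k : n} (hjk : j ≠ k) :
    (mergeCols A j k).permanent = A.permanent := by
  have ht : 0 < (Aᵀ j + Aᵀ k) ⬝ᵥ (Aᵀ j + Aᵀ k) :=
    zero_lt_two.trans_le (two_le_dotProduct_add_self_of_mem hA j k)
  rw [mergeCols, l2Normalize, permanent_updateCol_smul, updateCol_comm _ hjk,
    permanent_updateCol_smul, ← updateCol_comm _ hjk,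
    permanent_updateCol_updateCol_add_of_isMaxOn hA hmax hjk, ← mul_assoc, ← mul_inv,
    Real.mul_self_sqrt ht.le, mul_left_comm, inv_mul_cancel₀ ht.ne', mul_one]

theorem sqNormColSum_lt_mergeCols {A : Matrix n n ℝ} (hA : A ∈ unitNonnegCols n) {j k : n}
    (hjk : j ≠ k) (hne : Aᵀ j ≠ Aᵀ k) : sqNormColSum A < sqNormColSum (mergeCols A j k) := by
  set s := Aᵀ j + Aᵀ k
  set r := √(s ⬝ᵥ s)
  have ht : 2 ≤ s ⬝ᵥ s := two_le_dotProduct_add_self_of_mem hA j k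
  have hr : 0 < r := Real.sqrt_pos.2 (by linarith)
  have hr2 : r < 2 := by
    have := dotProduct_transpose_lt_one hA hne
    rw [Real.sqrt_lt' two_pos, dotProduct_add_self, hA.2 j, hA.2 k]
    linarith
  set c := 2 * r⁻¹ - 1
  have hc : 0 < c := by
    have : 1 < 2 * r⁻¹ := by rw [← div_eq_mul_inv, one_lt_div hr]; exact hr2
    linarith
  have hrow : ∀ i, ∑ l, mergeCols A j k i l = ∑ l, A i l + c * s i := fun i => by
    simp only [mergeCols, sum_updateCol_apply, updateCol_ne hjk.symm, l2Normalize, c, s,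
      Pi.smul_apply, Pi.add_apply, transpose_apply, smul_eq_mul]
    ring
  have hR : ∀ i, 0 ≤ ∑ l, A i l := fun i => sum_nonneg fun l _ => hA.1 i l
  have hs : ∀ i, 0 ≤ s i := fun i => add_nonneg (hA.1 i j) (hA.1 i k)
  simp only [sqNormColSum, hrow]
  calc ∑ i, (∑ l, A i l) ^ 2 < ∑ i, (∑ l, A i l) ^ 2 + c ^ 2 * (s ⬝ᵥ s) := by
        have : 0 < c ^ 2 * (s ⬝ᵥ s) := by positivity
        linarith
    _ ≤ ∑ i, (∑ l, A i l + c * s i) ^ 2 := by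
        rw [dotProduct, mul_sum, ← sum_add_distrib]
        gcongr with i
        nlinarith [mul_nonneg (mul_nonneg hc.le (hR i)) (hs i)]

theorem cols_eq_of_isMaxOn {A : Matrix n n ℝ} (hA : A ∈ unitNonnegCols n)
    (hmax : IsMaxOn permanent (unitNonnegCols n) A)
    (hG : ∀ B ∈ unitNonnegCols n, B.permanent = A.permanent → sqNormColSum B ≤ sqNormColSum A)
    (j k : n) : Aᵀ j = Aᵀ k := by
  by_contra hne
  have hjk : j ≠ k := by rintro rfl; exact hne rfl
  exact (hG _ (mergeCols_mem hA j k) (permanent_mergeCols_of_isMaxOn hA hmax hjk)).not_gt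
    (sqNormColSum_lt_mergeCols hA hjk hne)

theorem exists_isMaxOn_permanent_cols_eq :
    ∃ A ∈ unitNonnegCols n, IsMaxOn permanent (unitNonnegCols n) A ∧ ∀ j k, Aᵀ j = Aᵀ k := by
  obtain ⟨A₀, hA₀, hmax₀⟩ := (isCompact_unitNonnegCols (n := n)).exists_isMaxOn unitNonnegCols_nonempty
    continuous_permanent.continuousOn
  obtain ⟨A, ⟨hA, hAA₀⟩, hG⟩ := (isCompact_unitNonnegCols.inter_right
    (isClosed_eq continuous_permanent continuous_const)).exists_isMaxOn
    ⟨A₀, hA₀, rfl⟩ continuous_sqNormColSum.continuousOn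
  have hmax : IsMaxOn permanent (unitNonnegCols n) A := fun B hB => hAA₀ ▸ hmax₀ hB
  exact ⟨A, hA, hmax, cols_eq_of_isMaxOn hA hmax fun B hB hBA => hG ⟨hB, hBA.trans hAA₀⟩⟩

theorem permanent_le_of_mem_unitNonnegCols {A : Matrix n n ℝ} (hA : A ∈ unitNonnegCols n) :
    A.permanent ≤
      (Fintype.card n).factorial / (Fintype.card n : ℝ) ^ ((Fintype.card n : ℝ) / 2) := by
  rcases isEmpty_or_nonempty n with hn | ⟨⟨j₀⟩⟩
  · simp [permanent_isEmpty]
  obtain ⟨B, hB, hBmax, hBcols⟩ := exists_isMaxOn_permanent_cols_eq (n := n)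
  calc A.permanent ≤ B.permanent := hBmax hA
    _ = (Fintype.card n).factorial * ∏ i, B i j₀ :=
        permanent_of_cols_eq _ fun i j => congrFun (hBcols j j₀) i
    _ ≤ _ := by
        rw [div_eq_mul_inv]
        gcongr
        exact Real.prod_le_of_sum_sq_eq_one (fun i => hB.1 i j₀)
          (by simpa [dotProduct, sq] using hB.2 j₀)

theorem permanent_le_of_sum_rpow_eq_one {A : Matrix n n ℝ} (hA0 : ∀ i j, 0 ≤ A i j) {p : ℝ}
    (hp1 : 1 ≤ p) (hp2 : p ≤ 2) (hA1 : ∀ j, ∑ i, A i j ^ p = 1) :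
    A.permanent ≤
      ((Fintype.card n).factorial / (Fintype.card n : ℝ) ^ ((Fintype.card n : ℝ) / 2)) ^
        (2 - 2 / p) := by
  have hp : 0 < p := by linarith
  set θ := 2 - 2 / p
  have hθ0 : 0 ≤ θ := by
    rw [sub_nonneg, div_le_iff₀ hp]; linarith
  have hθ1 : θ ≤ 1 := by
    rw [sub_le_comm, le_div_iff₀ hp]; linarith
  have hsplit : ∀ a : ℝ, 0 ≤ a → (a ^ p) ^ (1 - θ) * (a ^ (p / 2)) ^ θ = a := fun a ha => by
    have hexp : p * (1 - θ) + p / 2 * θ = 1 := by simp only [θ]; field_simp; ring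
    rw [← Real.rpow_mul ha, ← Real.rpow_mul ha, ← Real.rpow_add' ha (by rw [hexp]; simp), hexp,
      Real.rpow_one]
  have hP : ∀ i j, 0 ≤ A.map (· ^ p) i j := fun i j => Real.rpow_nonneg (hA0 i j) _
  have hQ : ∀ i j, 0 ≤ A.map (· ^ (p / 2)) i j := fun i j => Real.rpow_nonneg (hA0 i j) _
  have hP1 : (A.map (· ^ p)).permanent ≤ 1 :=
    (permanent_le_prod_sum hP).trans_eq (by simp [hA1])
  have hQ2 : A.map (· ^ (p / 2)) ∈ unitNonnegCols n := ⟨hQ, fun j => by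
    simp only [dotProduct, transpose_apply, map_apply, ← Real.rpow_add' (hA0 _ j)
      (by rw [add_halves]; exact hp.ne'), add_halves, hA1]⟩
  calc A.permanent
      = (of fun i j => (A i j ^ p) ^ (1 - θ) * (A i j ^ (p / 2)) ^ θ).permanent := by
        congr 1; ext i j; simp [hsplit _ (hA0 i j)]
    _ ≤ (A.map (· ^ p)).permanent ^ (1 - θ) * (A.map (· ^ (p / 2))).permanent ^ θ :=
        permanent_rpow_mul_rpow_le hP hQ hθ0 hθ1
    _ ≤ 1 ^ (1 - θ) *
          ((Fintype.card n).factorial / (Fintype.card n : ℝ) ^ ((Fintype.card n : ℝ) / 2)) ^ θ :=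
        mul_le_mul (Real.rpow_le_rpow (permanent_nonneg_s17 hP) hP1 (by linarith))
          (Real.rpow_le_rpow (permanent_nonneg_s17 hQ) (permanent_le_of_mem_unitNonnegCols hQ2) hθ0)
          (Real.rpow_nonneg (permanent_nonneg_s17 hQ) _) (by positivity)
    _ = _ := by rw [Real.one_rpow, one_mul]

end UnitColumns

end Matrix

theorem sum_norm_rpow_pos {N : ℕ} (p : ℝ) {f : Fin N → ℂ} (hf : f ≠ 0) :
    0 < ∑ i, ‖f i‖ ^ p := by
  obtain ⟨i, hi⟩ := Function.ne_iff.1 hf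
  exact sum_pos' (fun _ _ => by positivity)
    ⟨i, mem_univ i, Real.rpow_pos_of_pos (norm_pos_iff.2 hi) _⟩

theorem lpnorm_pos {N : ℕ} (p : ℝ) {f : Fin N → ℂ} (hf : f ≠ 0) : 0 < lpnorm p f :=
  Real.rpow_pos_of_pos (sum_norm_rpow_pos p hf) _

theorem sum_rpow_div_lpnorm {N : ℕ} {p : ℝ} (hp : p ≠ 0) {f : Fin N → ℂ} (hf : f ≠ 0) :
    ∑ i, (‖f i‖ / lpnorm p f) ^ p = 1 := by
  have hS := sum_norm_rpow_pos p hf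
  have hLp : lpnorm p f ^ p = ∑ i, ‖f i‖ ^ p := by
    rw [lpnorm, ← Real.rpow_mul hS.le, one_div_mul_cancel hp, Real.rpow_one]
  simp only [Real.div_rpow (norm_nonneg _) (lpnorm_pos p hf).le, ← sum_div, hLp, div_self hS.ne']

theorem Cp_upper_bound_general {N : ℕ} (p : ℝ) (hp1 : 1 ≤ p) (hp2 : p ≤ 2) :
    Cp N p ≤ ((N.factorial : ℝ) / (N : ℝ) ^ ((N : ℝ) / 2)) ^ (2 - 2 / p) := by
  have hp : 0 < p := by linarith
  refine Real.sSup_le ?_ (by positivity)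
  rintro _ ⟨f, hf, rfl⟩
  have hL : ∀ j, 0 < lpnorm p (f j) := fun j => lpnorm_pos p (hf j)
  set A : Matrix (Fin N) (Fin N) ℝ := Matrix.of fun i j => ‖f j i‖ / lpnorm p (f j)
  have hA : (Matrix.of fun i j => f j i).map norm = Matrix.of fun i j => A i j * lpnorm p (f j) := by
    ext i j; simp [A, (hL j).ne']
  have hA1 := Matrix.permanent_le_of_sum_rpow_eq_one (A := A) (fun i j => div_nonneg (norm_nonneg _) (hL j).le) hp1 hp2
    fun j => sum_rpow_div_lpnorm hp.ne' (hf j)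
  rw [Fintype.card_fin] at hA1
  rw [div_le_iff₀ (prod_pos fun j _ => hL j)]
  calc ‖perm fun i j => f j i‖ = ‖(Matrix.of fun i j => f j i).permanent‖ := rfl
    _ ≤ ((Matrix.of fun i j => f j i).map norm).permanent := Matrix.norm_permanent_le_s17 _
    _ = (∏ j, lpnorm p (f j)) * A.permanent := by rw [hA, Matrix.permanent_of_mul_col]
    _ ≤ _ := by
        rw [mul_comm]
        exact mul_le_mul_of_nonneg_right hA1 (prod_nonneg fun j _ => (hL j).le)

theorem Cp_upper_bound {N : ℕ} (hN : 0 < N) (p : ℝ) (hp1 : 1 ≤ p) (hp2 : p ≤ 2) :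
    Cp N p ≤ ((N.factorial : ℝ) / (N : ℝ) ^ ((N : ℝ) / 2)) ^ (2 - 2 / p) :=
  Cp_upper_bound_general p hp1 hp2
end
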